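/- arXiv:2604.12952 — 10 statements merged into one kernel-verified Lean document; each statement's English description precedes it below -/
import Mathlib

section
/- Let k, n, ℓ, d be natural numbers with ℓ ≥ 1, and let H ⊆ [k]^n be a class of functions whose ℓ-DS dimension is at most d. Then |H| ≤ Σ_{i=0}^{d} C(n,i) · (k−ℓ)^i · ℓ^{n−i}. -/
/-- `B` is an `ℓ`-pseudo-cube: `B` is nonempty and for every `v ∈ B` and every coordinate
`i`, there exist at least `ℓ - 1` distinct vectors `u ∈ B` with `u ≠ v` that agree with `v`
on all coordinates except (possibly) `i`. -/
def IsPseudoCube {ι α : Type*} (ℓ : ℕ) (B : Set (ι → α)) : Prop :=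
  B.Nonempty ∧ ∀ v ∈ B, ∀ i : ι, ∃ U : Finset (ι → α), U.card = ℓ - 1 ∧
    ∀ u ∈ U, u ∈ B ∧ u ≠ v ∧ ∀ j, j ≠ i → u j = v j

/-- The coordinate set `I ⊆ [n]` is `ℓ`-DS-shattered by `H ⊆ [k]^n`: the projection of `H`
onto the coordinates in `I` contains an `(ℓ+1)`-pseudo-cube. -/
def DSShattered {n k : ℕ} (ℓ : ℕ) (H : Set (Fin n → Fin k)) (I : Finset (Fin n)) : Prop :=
  ∃ B : Set ({ i // i ∈ I } → Fin k),
    B ⊆ (fun h (i : { i // i ∈ I }) => h i.1) '' H ∧ IsPseudoCube (ℓ + 1) B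

/-! Polynomial method. Call `c : H → ℚ` *annihilating* if `∑_{v ∈ H} c v ∏ᵢ vᵢ ^ tᵢ = 0` for every
exponent `t ∈ [k]^n` with at most `d` coordinates `≥ ℓ`. We show that only `c = 0` is
annihilating; then the moment vectors of the points of `H` are linearly independent in `ℚ^W`,
where `W` is the set of such exponents, and `|W|` is exactly the right-hand side.

For annihilating `c`, consider the mixed pairings
`∑_{v ∈ H} c v ∏_{i ∈ S} [vᵢ = yᵢ] ∏_{i ∉ S} vᵢ ^ tᵢ`. Summing over `yⱼ` against `b ↦ b ^ s`
trades the indicator at `j ∈ S` for the monomial of degree `s`. By induction on `S` and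
Vandermonde, every pairing with `#(S ∪ {i | ℓ ≤ tᵢ}) ≤ d` vanishes. On the other hand, if
`c v ≠ 0`, pick `S` minimal carrying a nonzero pairing with all exponents off `S` below `ℓ`.
Minimality kills the moments of order `< ℓ` of `b ↦ pairing(S, y[j ↦ b], t)`, so by Vandermonde
this function is nonzero at `ℓ + 1` or more values `b`: the restrictions to `S` of the `y` carrying
nonzero pairings form an `(ℓ+1)`-pseudo-cube. So `S` is shattered and `|S| ≤ d`, a
contradiction. -/

open Finset Function

theorem eq_zero_of_sum_mul_pow_eq_zero {R ι : Type*} [CommRing R] [IsDomain R] [DecidableEq R]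
    [Fintype ι] {x : ι → R} (hx : Injective x) {h : ι → R} {m : ℕ}
    (hsupp : #{b | h b ≠ 0} ≤ m) (hmom : ∀ s < m, ∑ b, h b * x b ^ s = 0) : h = 0 := by
  set T : Finset ι := {b | h b ≠ 0}
  have hT : (fun j => h (T.equivFin.symm j)) = 0 := by
    refine Matrix.eq_zero_of_forall_pow_sum_mul_pow_eq_zero (f := fun j => x (T.equivFin.symm j))
      (hx.comp (Subtype.val_injective.comp T.equivFin.symm.injective)) fun s => ?_
    rw [T.equivFin.symm.sum_comp (fun b : T => h b * x b ^ (s : ℕ)),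
      T.sum_coe_sort (fun b => h b * x b ^ (s : ℕ)),
      sum_subset (subset_univ T) fun b _ hb => by simp_all [T]]
    exact hmom s (s.2.trans_le hsupp)
  funext b
  by_contra hb
  exact hb (by simpa using congrFun hT (T.equivFin ⟨b, by simpa [T] using hb⟩))

section Counting

variable {ι α : Type*} [Fintype ι] [DecidableEq ι] [Fintype α]
  (p : α → Prop) [DecidablePred p]

theorem filter_filter_eq_eq_piFinset (S : Finset ι) :
    ({f : ι → α | ({i | p (f i)} : Finset ι) = S} : Finset _) =
      Fintype.piFinset fun i => if i ∈ S then ({a | p a} : Finset α) else ({a | ¬p a} : Finset α) := by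
  ext f
  simp only [mem_filter, mem_univ, true_and, Fintype.mem_piFinset, Finset.ext_iff]
  refine forall_congr' fun i => ?_
  by_cases hi : i ∈ S <;> simp [hi]

theorem card_filter_filter_eq_eq (S : Finset ι) :
    #{f : ι → α | ({i | p (f i)} : Finset ι) = S} =
      #{a | p a} ^ #S * #{a | ¬p a} ^ (Fintype.card ι - #S) := by
  rw [filter_filter_eq_eq_piFinset, Fintype.card_piFinset]
  simp only [apply_ite card]
  rw [prod_ite, prod_const, prod_const, filter_mem_eq_inter, univ_inter, filter_notMem_eq_sdiff,
    card_sdiff_of_subset (subset_univ _), card_univ]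

theorem card_filter_card_filter_eq (s : ℕ) :
    #{f : ι → α | #{i | p (f i)} = s} =
      (Fintype.card ι).choose s * #{a | p a} ^ s * #{a | ¬p a} ^ (Fintype.card ι - s) := by
  rw [card_eq_sum_card_fiberwise (f := fun f : ι → α => ({i | p (f i)} : Finset ι))
    (t := powersetCard s univ) (fun f hf => by simpa using hf)]
  have hfiber : ∀ S ∈ powersetCard s (univ : Finset ι),
      #{f ∈ ({f : ι → α | #{i | p (f i)} = s} : Finset _) | ({i | p (f i)} : Finset ι) = S} =
        #{a | p a} ^ s * #{a | ¬p a} ^ (Fintype.card ι - s) := by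
    intro S hS
    obtain ⟨-, rfl⟩ := mem_powersetCard.mp hS
    rw [filter_filter, ← card_filter_filter_eq_eq]
    exact congrArg card (filter_congr fun f _ => and_iff_right_of_imp (congrArg card))
  rw [sum_congr rfl hfiber, sum_const, card_powersetCard, card_univ, smul_eq_mul, mul_assoc]

theorem card_filter_card_filter_le_eq (d : ℕ) :
    #{f : ι → α | #{i | p (f i)} ≤ d} = ∑ s ∈ range (d + 1),
      (Fintype.card ι).choose s * #{a | p a} ^ s * #{a | ¬p a} ^ (Fintype.card ι - s) := by
  rw [card_eq_sum_card_fiberwise (f := fun f : ι → α => #{i | p (f i)}) (t := range (d + 1))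
    fun f hf => by simpa [Nat.lt_succ_iff] using hf]
  refine sum_congr rfl fun s hs => ?_
  rw [← card_filter_card_filter_eq, filter_filter]
  congr 1
  ext f
  simp only [mem_filter, mem_univ, true_and, and_iff_right_iff_imp]
  intro hf
  simpa [hf, Nat.lt_succ_iff] using hs

end Counting

theorem Fin.card_filter_le_val (k ℓ : ℕ) : #{a : Fin k | ℓ ≤ (a : ℕ)} = k - ℓ := by
  have := card_filter_add_card_filter_not (s := univ) fun a : Fin k => (a : ℕ) < ℓ
  simp only [Fin.card_filter_val_lt, not_lt, card_univ, Fintype.card_fin] at this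
  omega

namespace DSSauer

section Pairing

variable {ι α R : Type*} [Fintype ι] [DecidableEq ι] [CommSemiring R]

lemma prod_update_apply (f : ι → α → R) (j : ι) (φ : α → R) (v : ι → α) :
    ∏ i, update f j φ i (v i) = φ (v j) * ∏ i ∈ univ.erase j, f i (v i) := by
  rw [← mul_prod_erase univ _ (mem_univ j), update_self]
  congr 1
  exact prod_congr rfl fun i hi => by rw [update_of_ne (ne_of_mem_erase hi)]

def pairing (H : Finset (ι → α)) (c : (ι → α) → R) (f : ι → α → R) : R :=
  ∑ v ∈ H, c v * ∏ i, f i (v i)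

variable [Fintype α] [DecidableEq α]

lemma sum_pairing_update_single_mul (H : Finset (ι → α)) (c : (ι → α) → R) (f : ι → α → R)
    (j : ι) (φ : α → R) :
    ∑ b, pairing H c (update f j (Pi.single b 1)) * φ b = pairing H c (update f j φ) := by
  simp only [pairing, sum_mul, prod_update_apply]
  rw [sum_comm]
  refine sum_congr rfl fun v _ => ?_
  simp [Pi.single_apply, mul_comm, mul_left_comm, ite_mul]

end Pairing

variable {n k : ℕ} {H : Finset (Fin n → Fin k)} {c : (Fin n → Fin k) → ℚ}

def mixedTest (S : Finset (Fin n)) (y t : Fin n → Fin k) : Fin n → Fin k → ℚ :=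
  fun i => if i ∈ S then Pi.single (y i) 1 else fun b => ((b : ℕ) : ℚ) ^ (t i : ℕ)

lemma mixedTest_insert_update {S : Finset (Fin n)} {j : Fin n} (hj : j ∉ S)
    (y t : Fin n → Fin k) (b : Fin k) :
    mixedTest (insert j S) (update y j b) t = update (mixedTest S y t) j (Pi.single b 1) := by
  funext i
  rcases eq_or_ne i j with rfl | hij
  · simp [mixedTest]
  · simp [mixedTest, hij]

lemma mixedTest_update {S : Finset (Fin n)} {j : Fin n} (hj : j ∉ S) (y t : Fin n → Fin k)
    (s : Fin k) :
    mixedTest S y (update t j s) =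
      update (mixedTest S y t) j fun b => ((b : ℕ) : ℚ) ^ (s : ℕ) := by
  funext i
  rcases eq_or_ne i j with rfl | hij
  · simp [mixedTest, hj]
  · simp [mixedTest, hij]

lemma sum_pairing_mixedTest_insert_mul_pow {S : Finset (Fin n)} {j : Fin n} (hj : j ∉ S)
    (y t : Fin n → Fin k) (s : Fin k) :
    ∑ b : Fin k, pairing H c (mixedTest (insert j S) (update y j b) t) * ((b : ℕ) : ℚ) ^ (s : ℕ)
      = pairing H c (mixedTest S y (update t j s)) := by
  simp only [mixedTest_insert_update hj, mixedTest_update hj, sum_pairing_update_single_mul]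

lemma pairing_mixedTest_eq_zero {ℓ d : ℕ}
    (hmom : ∀ t : Fin n → Fin k, #{i | ℓ ≤ (t i : ℕ)} ≤ d →
      ∑ v ∈ H, c v * ∏ i, ((v i : ℕ) : ℚ) ^ (t i : ℕ) = 0)
    (S : Finset (Fin n)) (y t : Fin n → Fin k) (hSt : #{i | i ∈ S ∨ ℓ ≤ (t i : ℕ)} ≤ d) :
    pairing H c (mixedTest S y t) = 0 := by
  induction S using Finset.induction_on generalizing y t with
  | empty => simpa [pairing, mixedTest] using hmom t (by simpa using hSt)
  | insert j S hj ih =>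
    have hzero : (fun b => pairing H c (mixedTest (insert j S) (update y j b) t)) = 0 := by
      refine eq_zero_of_sum_mul_pow_eq_zero (Nat.cast_injective.comp Fin.val_injective) (m := k)
        ((card_filter_le _ _).trans_eq (card_fin k)) fun s hs => ?_
      refine (sum_pairing_mixedTest_insert_mul_pow hj y t ⟨s, hs⟩).trans
        (ih _ _ ((card_le_card fun i => ?_).trans hSt))
      rcases eq_or_ne i j with rfl | hij <;> simp_all
    simpa using congrFun hzero (y j)

lemma pairing_mixedTest_univ {v : Fin n → Fin k} (hv : v ∈ H) (t : Fin n → Fin k) :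
    pairing H c (mixedTest univ v t) = c v := by
  rw [pairing, sum_eq_single_of_mem v hv fun w _ hwv => ?_]
  · simp [mixedTest]
  · obtain ⟨i, hi⟩ := ne_iff.mp hwv
    simp [mixedTest, prod_eq_zero (mem_univ i), Pi.single_apply, hi]

lemma exists_mem_eqOn_of_pairing_mixedTest_ne_zero {S : Finset (Fin n)} {y t : Fin n → Fin k}
    (hy : pairing H c (mixedTest S y t) ≠ 0) : ∃ v ∈ H, Set.EqOn v y S := by
  obtain ⟨v, hv, hne⟩ := exists_ne_zero_of_sum_ne_zero hy
  refine ⟨v, hv, fun i (hi : i ∈ S) => by_contra fun hvi => hne ?_⟩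
  simp [mixedTest, prod_eq_zero (mem_univ i), hi, hvi]

def witnesses (H : Finset (Fin n → Fin k)) (c : (Fin n → Fin k) → ℚ) (ℓ : ℕ)
    (S : Finset (Fin n)) : Set (Fin n → Fin k) :=
  {y | ∃ t : Fin n → Fin k, (∀ i ∉ S, (t i : ℕ) < ℓ) ∧ pairing H c (mixedTest S y t) ≠ 0}

lemma lt_card_pairing_mixedTest_update_ne_zero {ℓ : ℕ} {S : Finset (Fin n)} {j : Fin n}
    (hj : j ∉ S) (hS : witnesses H c ℓ S = ∅) {y t : Fin n → Fin k}
    (ht : ∀ i ∉ insert j S, (t i : ℕ) < ℓ) (hy : pairing H c (mixedTest (insert j S) y t) ≠ 0) :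
    ℓ < #{b | pairing H c (mixedTest (insert j S) (update y j b) t) ≠ 0} := by
  by_contra! hle
  -- Exponents live in `Fin k`, so only the moments of order `< min ℓ k` are available; this
  -- suffices because the support has at most `k` points anyway.
  have hzero : (fun b => pairing H c (mixedTest (insert j S) (update y j b) t)) = 0 := by
    refine eq_zero_of_sum_mul_pow_eq_zero (Nat.cast_injective.comp Fin.val_injective)
      (m := min ℓ k) (le_min hle ((card_filter_le _ _).trans_eq (card_fin k))) fun s hs => ?_
    rw [lt_min_iff] at hs
    refine (sum_pairing_mixedTest_insert_mul_pow hj y t ⟨s, hs.2⟩).trans (by_contra fun hne => ?_)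
    refine (Set.eq_empty_iff_forall_notMem.mp hS) y ⟨update t j ⟨s, hs.2⟩, fun i hi => ?_, hne⟩
    rcases eq_or_ne i j with rfl | hij
    · simpa using hs.1
    · simpa [hij] using ht i (by simp [hij, hi])
  exact hy (by simpa using congrFun hzero (y j))

lemma dsShattered_of_witnesses_erase_eq_empty {ℓ : ℕ} {S : Finset (Fin n)}
    (hne : (witnesses H c ℓ S).Nonempty) (hmin : ∀ j ∈ S, witnesses H c ℓ (S.erase j) = ∅) :
    DSShattered ℓ (H : Set (Fin n → Fin k)) S := by
  refine ⟨(fun y (i : {i // i ∈ S}) => y i.1) '' witnesses H c ℓ S, ?_, hne.image _, ?_⟩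
  · rintro _ ⟨y, ⟨t, -, hy⟩, rfl⟩
    obtain ⟨v, hv, hvy⟩ := exists_mem_eqOn_of_pairing_mixedTest_ne_zero hy
    exact ⟨v, hv, funext fun i => hvy i.2⟩
  rintro _ ⟨y, ⟨t, ht, hy⟩, rfl⟩ j
  have hlt := lt_card_pairing_mixedTest_update_ne_zero (notMem_erase j.1 S) (hmin j j.2)
    (by rwa [insert_erase j.2]) (by rwa [insert_erase j.2])
  rw [insert_erase j.2] at hlt
  set B : Finset (Fin k) := {b | pairing H c (mixedTest S (update y j b) t) ≠ 0}
  have hyB : y j ∈ B := by simpa [B] using hy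
  obtain ⟨U, hUB, hU⟩ := exists_subset_card_eq (s := B.erase (y j)) (n := ℓ)
    (by rw [card_erase_of_mem hyB]; omega)
  have hinj : Injective fun b (i : {i // i ∈ S}) => update y j b i := fun b b' h => by
    simpa using congrFun h j
  refine ⟨U.image fun b (i : {i // i ∈ S}) => update y j b i, by
    rw [card_image_of_injective _ hinj, hU, add_tsub_cancel_right], ?_⟩
  simp only [mem_image]
  rintro _ ⟨b, hb, rfl⟩
  obtain ⟨hby, hbB⟩ := mem_erase.mp (hUB hb)
  refine ⟨⟨update y j b, ⟨t, ht, by simpa [B] using hbB⟩, rfl⟩, fun h => hby ?_, fun i hij => ?_⟩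
  · simpa using congrFun h j
  · exact update_of_ne (fun h => hij (Subtype.ext h)) _ _

theorem eq_zero_of_forall_moment_eq_zero {ℓ d : ℕ}
    (hdim : ∀ I : Finset (Fin n), DSShattered ℓ (H : Set (Fin n → Fin k)) I → I.card ≤ d)
    (hmom : ∀ t : Fin n → Fin k, #{i | ℓ ≤ (t i : ℕ)} ≤ d →
      ∑ v ∈ H, c v * ∏ i, ((v i : ℕ) : ℚ) ^ (t i : ℕ) = 0) :
    ∀ v ∈ H, c v = 0 := by
  classical
  by_contra! ⟨v, hv, hcv⟩
  have hwit : ({S | (witnesses H c ℓ S).Nonempty} : Finset (Finset (Fin n))).Nonempty :=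
    ⟨univ, by simpa using ⟨v, v, by simp, by rwa [pairing_mixedTest_univ hv]⟩⟩
  obtain ⟨S, hS, hmin⟩ := exists_min_image _ card hwit
  obtain ⟨y, t, ht, hy⟩ := (mem_filter.mp hS).2
  have hshat := dsShattered_of_witnesses_erase_eq_empty (mem_filter.mp hS).2 fun j hj =>
    Set.not_nonempty_iff_eq_empty.mp fun hne =>
      (card_erase_lt_of_mem hj).not_ge (hmin _ (mem_filter.mpr ⟨mem_univ _, hne⟩))
  refine hy (pairing_mixedTest_eq_zero hmom S y t ((card_le_card fun i hi => ?_).trans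
    (hdim S hshat)))
  by_contra hiS
  simp only [mem_filter, mem_univ, true_and] at hi
  exact (hi.resolve_left hiS).not_gt (ht i hiS)

end DSSauer

theorem ds_sauer_inequality_general (k n ℓ d : ℕ)
    (H : Finset (Fin n → Fin k))
    (hdim : ∀ I : Finset (Fin n), DSShattered ℓ (H : Set (Fin n → Fin k)) I → I.card ≤ d) :
    H.card ≤ ∑ i ∈ Finset.range (d + 1), Nat.choose n i * (k - ℓ) ^ i * ℓ ^ (n - i) := by
  let W : Finset (Fin n → Fin k) := {t | #{i | ℓ ≤ (t i : ℕ)} ≤ d}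
  have hindep : LinearIndepOn ℚ (fun (v : Fin n → Fin k) (t : W) =>
      ∏ i, ((v i : ℕ) : ℚ) ^ (t.1 i : ℕ)) (H : Set (Fin n → Fin k)) := by
    refine linearIndepOn_finset_iff.mpr fun c hc =>
      DSSauer.eq_zero_of_forall_moment_eq_zero hdim fun t ht => ?_
    simpa [Finset.sum_apply] using congrFun hc ⟨t, by simpa [W] using ht⟩
  calc H.card ≤ Module.finrank ℚ (W → ℚ) := by
        simpa using hindep.linearIndependent.fintype_card_le_finrank
    _ = #{t : Fin n → Fin k | #{i | ℓ ≤ (t i : ℕ)} ≤ d} :=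
        (Module.finrank_fintype_fun_eq_card ℚ).trans (Fintype.card_coe W)
    _ ≤ _ := by
      simp only [card_filter_card_filter_le_eq (ι := Fin n) (fun a : Fin k => ℓ ≤ (a : ℕ)),
        Fintype.card_fin, Fin.card_filter_le_val, not_le, Fin.card_filter_val_lt]
      gcongr
      exact min_le_right k ℓ

/-- Sharp Sauer inequality for the `ℓ`-DS dimension: if every `ℓ`-DS-shattered coordinate
set has size at most `d`, then `|H| ≤ ∑_{i=0}^d C(n,i) (k-ℓ)^i ℓ^{n-i}`. -/
theorem ds_sauer_inequality (k n ℓ d : ℕ) (hℓ : 1 ≤ ℓ)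
    (H : Finset (Fin n → Fin k))
    (hdim : ∀ I : Finset (Fin n), DSShattered ℓ (H : Set (Fin n → Fin k)) I → I.card ≤ d) :
    H.card ≤ ∑ i ∈ Finset.range (d + 1), Nat.choose n i * (k - ℓ) ^ i * ℓ ^ (n - i) :=
  ds_sauer_inequality_general k n ℓ d H hdim
end

section
/- Let k, n, ℓ, d be natural numbers with ℓ ≥ 1, k ≥ ℓ+1, and d ≤ n, and let H = {v ∈ [k]^n : |{i ∈ [n] : v(i) ≥ ℓ}| ≤ d}. Then the ℓ-DS dimension of H equals d. Consequently, the inequality |H| ≤ Σ_{i=0}^{d} C(n,i)·(k−ℓ)^i·ℓ^{n−i} for classes of ℓ-DS dimension at most d is attained with equality by H. -/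
lemma card_filter_lt (k c : ℕ) (h : c ≤ k) :
    (Finset.univ.filter fun x : Fin k => (x : ℕ) < c).card = c := by
  have heq : (Finset.univ.filter fun x : Fin k => (x : ℕ) < c) =
      (Finset.univ : Finset (Fin c)).image (Fin.castLE h) := by
    ext x
    simp only [Finset.mem_filter, Finset.mem_univ, true_and, Finset.mem_image]
    constructor
    · intro hx; exact ⟨⟨(x : ℕ), hx⟩, Fin.ext rfl⟩
    · rintro ⟨y, rfl⟩; exact y.2
  rw [heq, Finset.card_image_of_injective _ (Fin.castLE_injective h)]
  simp

lemma card_filter_ge (k c : ℕ) (h : c ≤ k) :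
    (Finset.univ.filter fun x : Fin k => c ≤ (x : ℕ)).card = k - c := by
  have := Finset.card_filter_add_card_filter_not
    (s := (Finset.univ : Finset (Fin k))) (p := fun x : Fin k => (x : ℕ) < c)
  simp only [not_lt, card_filter_lt k c h, Finset.card_univ, Fintype.card_fin] at this
  omega

/-- The class `H = {v ∈ [k]^n : v takes values ≥ ℓ on at most d coordinates}` has
`ℓ`-DS dimension exactly `d`, and it attains the DS-Sauer bound with equality. -/
theorem extremal_class_DS_dim (k n ℓ d : ℕ) (hℓ : 1 ≤ ℓ) (hk : ℓ + 1 ≤ k) (hd : d ≤ n)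
    (H : Finset (Fin n → Fin k))
    (hH : H = Finset.univ.filter fun v : Fin n → Fin k =>
        (Finset.univ.filter fun i : Fin n => ℓ ≤ (v i : ℕ)).card ≤ d) :
    (∃ I : Finset (Fin n), I.card = d ∧ DSShattered ℓ (H : Set (Fin n → Fin k)) I) ∧
    (∀ I : Finset (Fin n), DSShattered ℓ (H : Set (Fin n → Fin k)) I → I.card ≤ d) ∧
    H.card = ∑ i ∈ Finset.range (d + 1), Nat.choose n i * (k - ℓ) ^ i * ℓ ^ (n - i) := by
  refine ⟨?_, ?_, ?_⟩
  · -- part 1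
      have hk0 : 0 < k := by omega
      have hmemH : ∀ v : Fin n → Fin k, v ∈ H ↔
          (Finset.univ.filter fun i : Fin n => ℓ ≤ (v i : ℕ)).card ≤ d := by
        intro v; subst hH; simp
      obtain ⟨I, -, hIcard⟩ : ∃ I ⊆ (Finset.univ : Finset (Fin n)), I.card = d := by
        apply Finset.exists_subset_card_eq; simpa using hd
      refine ⟨I, hIcard, ?_⟩
      refine ⟨{f | ∀ i, (f i : ℕ) ≤ ℓ}, ?_, ?_, ?_⟩
      · -- subset of projection
        intro f hf
        refine ⟨fun i => if hi : i ∈ I then f ⟨i, hi⟩ else ⟨0, hk0⟩, ?_, ?_⟩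
        · rw [Finset.mem_coe, hmemH]
          calc (Finset.univ.filter fun i : Fin n =>
                ℓ ≤ ((if hi : i ∈ I then f ⟨i, hi⟩ else ⟨0, hk0⟩ : Fin k) : ℕ)).card
              ≤ I.card := by
                apply Finset.card_le_card
                intro i hi
                simp only [Finset.mem_filter, Finset.mem_univ, true_and] at hi
                by_contra hni
                rw [dif_neg hni] at hi
                have h0 : ℓ ≤ 0 := hi; omega
            _ = d := hIcard
        · funext i; exact dif_pos i.2
      · exact ⟨fun _ => ⟨0, hk0⟩, fun i => by simp⟩
      · -- pseudo-cube property
        intro v hv i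
        classical
        refine ⟨((Finset.univ.filter fun x : Fin k => (x : ℕ) < ℓ + 1).erase (v i)).image
          (fun x => Function.update v i x), ?_, ?_⟩
        · have hinj : Function.Injective (fun x : Fin k => Function.update v i x) := by
            intro a b hab; simpa using congrFun hab i
          rw [Finset.card_image_of_injective _ hinj,
            Finset.card_erase_of_mem (by
              simp only [Finset.mem_filter, Finset.mem_univ, true_and]
              exact Nat.lt_succ_of_le (hv i)),
            card_filter_lt _ _ hk]
        · intro u hu
          simp only [Finset.mem_image, Finset.mem_erase, Finset.mem_filter, Finset.mem_univ,
            true_and] at hu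
          obtain ⟨x, ⟨hxne, hxlt⟩, rfl⟩ := hu
          refine ⟨?_, ?_, ?_⟩
          · intro j
            by_cases hj : j = i
            · subst hj; simp; omega
            · rw [Function.update_of_ne hj]; exact hv j
          · intro h
            exact hxne (by simpa using congrFun h i)
          · intro j hj
            exact Function.update_of_ne hj _ _
  · -- part 2
      classical
      have hkℓ : ℓ ≤ k := by omega
      intro I ⟨B, hBH, ⟨⟨v₀, hv₀⟩, hPC⟩⟩
      -- main induction: find w ∈ B with w i ≥ ℓ on all of S
      have key : ∀ S : Finset {i // i ∈ I}, ∃ w ∈ B, ∀ i ∈ S, ℓ ≤ ((w i : Fin k) : ℕ) := by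
        intro S
        induction S using Finset.induction_on with
        | empty => exact ⟨v₀, hv₀, by simp⟩
        | @insert a S ha ih =>
          obtain ⟨w, hwB, hwS⟩ := ih
          obtain ⟨U, hUcard, hU⟩ := hPC w hwB a
          have hUc : U.card = ℓ := by omega
          have hwU : w ∉ U := fun h => (hU w h).2.1 rfl
          set V : Finset ({i // i ∈ I} → Fin k) := insert w U with hV
          have hVcard : V.card = ℓ + 1 := by
            rw [hV, Finset.card_insert_of_notMem hwU, hUc]
          have hagree : ∀ x ∈ V, ∀ j, j ≠ a → x j = w j := by
            intro x hx j hj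
            rcases Finset.mem_insert.mp hx with rfl | hx
            · rfl
            · exact (hU x hx).2.2 j hj
          have hinj : Set.InjOn (fun x : {i // i ∈ I} → Fin k => x a) (V : Set _) := by
            intro x hx y hy hxy
            funext j
            by_cases hj : j = a
            · subst hj; exact hxy
            · rw [hagree x hx j hj, hagree y hy j hj]
          have himg : (V.image (fun x => x a)).card = ℓ + 1 := by
            rw [Finset.card_image_of_injOn hinj, hVcard]
          -- some element of V has value ≥ ℓ at a
          have : ∃ x ∈ V, ℓ ≤ ((x a : Fin k) : ℕ) := by
            by_contra hcon
            push_neg at hcon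
            have hsub : V.image (fun x => x a) ⊆
                Finset.univ.filter fun y : Fin k => (y : ℕ) < ℓ := by
              intro y hy
              simp only [Finset.mem_image] at hy
              obtain ⟨x, hx, rfl⟩ := hy
              simp only [Finset.mem_filter, Finset.mem_univ, true_and]
              exact hcon x hx
            have h2 := Finset.card_le_card hsub
            rw [himg, card_filter_lt _ _ hkℓ] at h2
            exact Nat.not_succ_le_self ℓ h2
          obtain ⟨x, hxV, hxa⟩ := this
          have hxB : x ∈ B := by
            rcases Finset.mem_insert.mp hxV with rfl | hx
            · exact hwB
            · exact (hU x hx).1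
          refine ⟨x, hxB, ?_⟩
          intro i hi
          rcases Finset.mem_insert.mp hi with rfl | hi
          · exact hxa
          · by_cases hia : i = a
            · subst hia; exact hxa
            · rw [hagree x hxV i hia]; exact hwS i hi
      obtain ⟨w, hwB, hw⟩ := key Finset.univ
      obtain ⟨h, hhH, hproj⟩ := hBH hwB
      have hhH' : (Finset.univ.filter fun i : Fin n => ℓ ≤ ((h i : Fin k) : ℕ)).card ≤ d := by
        have := hhH
        rw [Finset.mem_coe, hH, Finset.mem_filter] at this
        exact this.2
      calc I.card ≤ (Finset.univ.filter fun i : Fin n => ℓ ≤ ((h i : Fin k) : ℕ)).card := by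
            apply Finset.card_le_card
            intro i hi
            simp only [Finset.mem_filter, Finset.mem_univ, true_and]
            have := hw ⟨i, hi⟩ (Finset.mem_univ _)
            rwa [← hproj] at this
        _ ≤ d := hhH'
  · -- part 3
      classical
      have hkℓ : ℓ ≤ k := by omega
      set F : (Fin n → Fin k) → Finset (Fin n) :=
        fun v => Finset.univ.filter fun i => ℓ ≤ (v i : ℕ) with hF
      set 𝒮 : Finset (Finset (Fin n)) :=
        Finset.univ.powerset.filter fun S => S.card ≤ d with h𝒮
      have hmaps : ∀ v ∈ H, F v ∈ 𝒮 := by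
        intro v hv
        rw [hH, Finset.mem_filter] at hv
        simp only [h𝒮, Finset.mem_filter, Finset.mem_powerset]
        exact ⟨Finset.subset_univ _, hv.2⟩
      rw [Finset.card_eq_sum_card_fiberwise hmaps]
      -- each fiber over S has card (k-ℓ)^|S| * ℓ^(n-|S|)
      have hfiber : ∀ S ∈ 𝒮, (H.filter fun v => F v = S).card =
          (k - ℓ) ^ S.card * ℓ ^ (n - S.card) := by
        intro S hS
        simp only [h𝒮, Finset.mem_filter, Finset.mem_powerset] at hS
        have hHf : (H.filter fun v => F v = S) =
            Fintype.piFinset (fun i : Fin n =>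
              if i ∈ S then Finset.univ.filter fun x : Fin k => ℓ ≤ (x : ℕ)
              else Finset.univ.filter fun x : Fin k => (x : ℕ) < ℓ) := by
          ext v
          simp only [Finset.mem_filter, Fintype.mem_piFinset, hH, Finset.mem_univ, true_and]
          constructor
          · rintro ⟨-, rfl⟩
            intro i
            by_cases hi : ℓ ≤ (v i : ℕ)
            · rw [if_pos (by simp [hF, hi] : i ∈ F v), Finset.mem_filter]
              exact ⟨Finset.mem_univ _, hi⟩
            · rw [if_neg (by simp [hF]; omega : i ∉ F v), Finset.mem_filter]
              exact ⟨Finset.mem_univ _, by omega⟩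
          · intro hv
            have hFv : F v = S := by
              ext i
              simp only [hF, Finset.mem_filter, Finset.mem_univ, true_and]
              constructor
              · intro hi
                by_contra hni
                have := hv i
                rw [if_neg hni, Finset.mem_filter] at this
                omega
              · intro hi
                have := hv i
                rw [if_pos hi, Finset.mem_filter] at this
                exact this.2
            exact ⟨by show (F v).card ≤ d; rw [hFv]; exact hS.2, hFv⟩
        rw [hHf, Fintype.card_piFinset]
        rw [← Finset.prod_mul_prod_compl S]
        have h1 : ∀ i ∈ S, (if i ∈ S then Finset.univ.filter fun x : Fin k => ℓ ≤ (x : ℕ)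
              else Finset.univ.filter fun x : Fin k => (x : ℕ) < ℓ).card = k - ℓ := by
          intro i hi; rw [if_pos hi, card_filter_ge k ℓ hkℓ]
        have h2 : ∀ i ∈ Sᶜ, (if i ∈ S then Finset.univ.filter fun x : Fin k => ℓ ≤ (x : ℕ)
              else Finset.univ.filter fun x : Fin k => (x : ℕ) < ℓ).card = ℓ := by
          intro i hi; rw [if_neg (Finset.mem_compl.mp hi), card_filter_lt k ℓ hkℓ]
        rw [Finset.prod_congr rfl h1, Finset.prod_congr rfl h2, Finset.prod_const,
          Finset.prod_const, Finset.card_compl]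
        simp
      rw [Finset.sum_congr rfl hfiber]
      -- now group 𝒮 by cardinality
      have h𝒮eq : 𝒮 = (Finset.range (d + 1)).biUnion
          (fun s => Finset.powersetCard s (Finset.univ : Finset (Fin n))) := by
        ext S
        simp only [h𝒮, Finset.mem_filter, Finset.mem_powerset, Finset.mem_biUnion,
          Finset.mem_range, Finset.mem_powersetCard]
        constructor
        · rintro ⟨hsub, hcard⟩; exact ⟨S.card, by omega, hsub, rfl⟩
        · rintro ⟨s, hs, hsub, rfl⟩; exact ⟨hsub, by omega⟩
      rw [h𝒮eq, Finset.sum_biUnion]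
      · apply Finset.sum_congr rfl
        intro s hs
        have : ∀ S ∈ Finset.powersetCard s (Finset.univ : Finset (Fin n)),
            (k - ℓ) ^ S.card * ℓ ^ (n - S.card) = (k - ℓ) ^ s * ℓ ^ (n - s) := by
          intro S hS
          rw [(Finset.mem_powersetCard.mp hS).2]
        rw [Finset.sum_congr rfl this, Finset.sum_const, Finset.card_powersetCard,
          Finset.card_univ, Fintype.card_fin, smul_eq_mul, mul_assoc]
      · intro a ha b hb hab
        simp only [Finset.disjoint_left, Finset.mem_powersetCard]
        rintro S ⟨-, rfl⟩ ⟨-, h⟩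
        exact hab h
end

section
/- Let k, n, ℓ, d be natural numbers with ℓ ≥ 1, k ≥ ℓ+1, and d ≤ n, and let H = {v ∈ [k]^n : |{i ∈ [n] : v(i) ≥ ℓ}| ≤ d}. Then the ℓ-Natarajan dimension of H equals d. -/
/-- `B ⊆ [k]^ι` is an `ℓ`-cube: a Cartesian product `∏ i, Y i` where each `Y i ⊆ [k]`
has exactly `ℓ` elements. -/
def IsCube {ι : Type*} {k : ℕ} (ℓ : ℕ) (B : Set (ι → Fin k)) : Prop :=
  ∃ Y : ι → Finset (Fin k), (∀ i, (Y i).card = ℓ) ∧ B = {v | ∀ i, v i ∈ Y i}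

/-- The coordinate set `I ⊆ [n]` is `(ℓ+1)`-Natarajan-shattered by `H ⊆ [k]^n`: the
projection of `H` onto the coordinates in `I` contains an `(ℓ+1)`-cube. -/
def NatarajanShattered {n k : ℕ} (ℓ : ℕ) (H : Set (Fin n → Fin k)) (I : Finset (Fin n)) :
    Prop :=
  ∃ B : Set ({ i // i ∈ I } → Fin k),
    B ⊆ (fun h (i : { i // i ∈ I }) => h i.1) '' H ∧ IsCube (ℓ + 1) B

lemma big_elem {k ℓ : ℕ} (Y : Finset (Fin k)) (hY : Y.card = ℓ + 1) :
    ∃ y ∈ Y, ℓ ≤ (y : ℕ) := by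
  by_contra h
  push_neg at h
  have hsub : Y.image Fin.val ⊆ Finset.range ℓ := by
    intro x hx
    simp only [Finset.mem_image] at hx
    obtain ⟨y, hy, rfl⟩ := hx
    exact Finset.mem_range.2 (h y hy)
  have := Finset.card_le_card hsub
  rw [Finset.card_image_of_injective _ Fin.val_injective, hY, Finset.card_range] at this
  omega

/-- The class `H = {v ∈ [k]^n : v takes values ≥ ℓ on at most d coordinates}` has
`ℓ`-Natarajan dimension exactly `d`. -/
theorem extremal_class_natarajan_dim (k n ℓ d : ℕ) (hℓ : 1 ≤ ℓ) (hk : ℓ + 1 ≤ k)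
    (hd : d ≤ n) (H : Finset (Fin n → Fin k))
    (hH : H = Finset.univ.filter fun v : Fin n → Fin k =>
        (Finset.univ.filter fun i : Fin n => ℓ ≤ (v i : ℕ)).card ≤ d) :
    (∃ I : Finset (Fin n), I.card = d ∧ NatarajanShattered ℓ (H : Set (Fin n → Fin k)) I) ∧
    (∀ I : Finset (Fin n), NatarajanShattered ℓ (H : Set (Fin n → Fin k)) I → I.card ≤ d) := by
  have hk0 : 0 < k := by omega
  constructor
  · -- lower bound
    obtain ⟨I, -, hIcard⟩ := Finset.exists_subset_card_eq (s := (Finset.univ : Finset (Fin n)))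
      (by simpa using hd)
    refine ⟨I, hIcard, ?_⟩
    set Y : Finset (Fin k) := Finset.univ.image (Fin.castLE hk) with hYdef
    have hYcard : Y.card = ℓ + 1 := by
      rw [hYdef, Finset.card_image_of_injective _ (Fin.castLE_injective hk)]
      simp
    refine ⟨{v | ∀ i, v i ∈ Y}, ?_, ⟨fun _ => Y, fun _ => hYcard, rfl⟩⟩
    intro v hv
    classical
    refine ⟨fun j => if hj : j ∈ I then v ⟨j, hj⟩ else ⟨0, hk0⟩, ?_, ?_⟩
    · simp only [hH, Finset.coe_filter, Set.mem_setOf_eq, Finset.mem_univ, true_and]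
      calc (Finset.univ.filter fun i : Fin n =>
              ℓ ≤ ((if hj : i ∈ I then v ⟨i, hj⟩ else ⟨0, hk0⟩ : Fin k) : ℕ)).card
          ≤ I.card := by
            apply Finset.card_le_card
            intro j hj
            simp only [Finset.mem_filter] at hj
            by_contra hjI
            rw [dif_neg hjI] at hj
            simp at hj
            omega
        _ = d := hIcard
    · funext i
      simp [i.2]
  · -- upper bound
    rintro I ⟨B, hBH, Y, hYcard, rfl⟩
    classical
    choose y hyY hyℓ using fun i => big_elem (Y i) (hYcard i)
    obtain ⟨h, hhH, hproj⟩ := hBH (fun i => hyY i)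
    rw [hH] at hhH
    simp only [Finset.coe_filter, Set.mem_setOf_eq, Finset.mem_univ, true_and] at hhH
    refine le_trans (Finset.card_le_card ?_) hhH
    intro i hi
    simp only [Finset.mem_filter, Finset.mem_univ, true_and]
    have := congrFun hproj ⟨i, hi⟩
    simp only at this
    rw [this]
    exact hyℓ ⟨i, hi⟩
end

section
/- Let k and ℓ be natural numbers with 1 ≤ ℓ ≤ k, and let H ⊆ [k] × [k] be a set whose ℓ-DS dimension is at most 1 (equivalently, H contains no (ℓ+1)-pseudo-cube as a subset of [k]^2). Then |H| ≤ ℓ·(2k − ℓ). -/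
namespace DSProofAux

def oth (i : Fin 2) : Fin 2 := if i = 0 then 1 else 0

lemma oth_spec {i j : Fin 2} (h : j ≠ i) : j = oth i := by
  fin_cases i <;> fin_cases j <;> simp_all [oth]

lemma isPseudoCube_image_comp {ι ι' α : Type*} (e : ι' ≃ ι) (ℓ : ℕ) (B : Set (ι → α))
    (hB : IsPseudoCube ℓ B) : IsPseudoCube ℓ ((fun f => f ∘ e) '' B) := by
  classical
  obtain ⟨⟨v0, hv0⟩, hspec⟩ := hB
  have hinj : Function.Injective (fun f : ι → α => f ∘ e) := by
    intro f g h
    funext i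
    have := congrFun h (e.symm i)
    simpa using this
  refine ⟨⟨v0 ∘ e, ⟨v0, hv0, rfl⟩⟩, ?_⟩
  rintro _ ⟨v, hv, rfl⟩ i'
  obtain ⟨U, hUcard, hU⟩ := hspec v hv (e i')
  refine ⟨U.image (fun f => f ∘ e),
    by rw [Finset.card_image_of_injective _ hinj, hUcard], ?_⟩
  rintro u' hu'
  simp only [Finset.mem_image] at hu'
  obtain ⟨u, hu, rfl⟩ := hu'
  obtain ⟨huB, hune, hagree⟩ := hU u hu
  refine ⟨⟨u, huB, rfl⟩, fun h => hune (hinj h), ?_⟩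
  intro j' hj'
  exact hagree (e j') (fun h => hj' (e.injective h))

lemma pc_of_heavy {α : Type*} [DecidableEq α] (ℓ : ℕ) (S : Finset (Fin 2 → α))
    (hne : S.Nonempty)
    (h : ∀ v ∈ S, ∀ i : Fin 2, ℓ + 1 ≤ (S.filter (fun u => u (oth i) = v (oth i))).card) :
    IsPseudoCube (ℓ + 1) (↑S : Set (Fin 2 → α)) := by
  refine ⟨by exact_mod_cast hne, ?_⟩
  intro v hv i
  have hvS : v ∈ S := by exact_mod_cast hv
  have hvL : v ∈ S.filter (fun u => u (oth i) = v (oth i)) :=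
    Finset.mem_filter.mpr ⟨hvS, rfl⟩
  have hL : ℓ ≤ ((S.filter (fun u => u (oth i) = v (oth i))).erase v).card := by
    rw [Finset.card_erase_of_mem hvL]
    exact Nat.le_sub_one_of_lt (h v hvS i)
  obtain ⟨U, hUsub, hUcard⟩ := Finset.exists_subset_card_eq hL
  refine ⟨U, by simpa using hUcard, ?_⟩
  intro u hu
  have := hUsub hu
  rw [Finset.mem_erase, Finset.mem_filter] at this
  refine ⟨by exact_mod_cast this.2.1, this.1, ?_⟩
  intro j hj
  rw [oth_spec hj]
  exact this.2.2

lemma arith_small (ℓ a b : ℕ) (h : a ≤ ℓ ∨ b ≤ ℓ) :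
    a * b + min a ℓ * min b ℓ ≤ ℓ * a + ℓ * b := by
  rcases le_total a ℓ with ha | ha <;> rcases le_total b ℓ with hb | hb <;>
    simp only [min_eq_left, min_eq_right, ha, hb] <;>
    [skip; skip; skip; (rcases h with h | h)] <;> nlinarith


lemma main_bound {k : ℕ} (ℓ : ℕ) (hℓ : 1 ≤ ℓ) :
    ∀ N : ℕ, ∀ c : Fin 2 → Finset (Fin k),
      (c 0).card + (c 1).card ≤ N →
      ∀ S : Finset (Fin 2 → Fin k),
        (∀ B : Set (Fin 2 → Fin k), B ⊆ ↑S → ¬ IsPseudoCube (ℓ + 1) B) →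
        (∀ v ∈ S, ∀ t : Fin 2, v t ∈ c t) →
        S.card + min (c 0).card ℓ * min (c 1).card ℓ
          ≤ ℓ * (c 0).card + ℓ * (c 1).card := by
  intro N
  induction N with
  | zero =>
    intro c hN S hcube hmem
    have hS : S = ∅ := by
      rcases S.eq_empty_or_nonempty with h | ⟨v, hv⟩
      · exact h
      · have := hmem v hv 0
        have h0 : (c 0).card = 0 := by omega
        rw [Finset.card_eq_zero] at h0
        simp [h0] at this
    subst hS
    simp only [Finset.card_empty, Nat.zero_add]
    calc min (c 0).card ℓ * min (c 1).card ℓ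
        ≤ (c 0).card * ℓ := Nat.mul_le_mul (Nat.min_le_left _ _) (Nat.min_le_right _ _)
      _ = ℓ * (c 0).card := Nat.mul_comm _ _
      _ ≤ ℓ * (c 0).card + ℓ * (c 1).card := Nat.le_add_right _ _
  | succ N ih =>
    intro c hN S hcube hmem
    -- trivial case: one side small, use the product bound
    by_cases hsmall : (c 0).card ≤ ℓ ∨ (c 1).card ≤ ℓ
    · have hprod : S.card ≤ (c 0).card * (c 1).card := by
        rw [← Finset.card_product]
        apply Finset.card_le_card_of_injOn (fun v => (v 0, v 1))
        · intro v hv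
          exact Finset.mem_product.mpr ⟨hmem v hv 0, hmem v hv 1⟩
        · intro u _ w _ h
          have h0 : u 0 = w 0 := congrArg Prod.fst h
          have h1 : u 1 = w 1 := congrArg Prod.snd h
          funext t
          fin_cases t <;> assumption
      have := arith_small ℓ (c 0).card (c 1).card hsmall
      linarith
    push_neg at hsmall
    obtain ⟨ha, hb⟩ := hsmall
    rcases S.eq_empty_or_nonempty with hS | hSne
    · subst hS
      simp only [Finset.card_empty, Nat.zero_add]
      calc min (c 0).card ℓ * min (c 1).card ℓ
          ≤ (c 0).card * ℓ := Nat.mul_le_mul (Nat.min_le_left _ _) (Nat.min_le_right _ _)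
        _ = ℓ * (c 0).card := Nat.mul_comm _ _
        _ ≤ ℓ * (c 0).card + ℓ * (c 1).card := Nat.le_add_right _ _
    -- some line is light
    have hlight : ¬ ∀ v ∈ S, ∀ i : Fin 2,
        ℓ + 1 ≤ (S.filter (fun u => u (oth i) = v (oth i))).card := by
      intro hall
      exact hcube ↑S (le_refl _) (pc_of_heavy ℓ S hSne hall)
    push_neg at hlight
    obtain ⟨v, hvS, i, hlt⟩ := hlight
    have hmins : min (c 0).card ℓ = ℓ := min_eq_right (le_of_lt ha)
    have hmins' : min (c 1).card ℓ = ℓ := min_eq_right (le_of_lt hb)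
    fin_cases i
    · -- line fixes coordinate 1; remove value v 1 from c 1
      have hlt1 : (S.filter (fun u => u 1 = v 1)).card ≤ ℓ := Nat.lt_succ_iff.mp hlt
      have hb1 : v 1 ∈ c 1 := hmem v hvS 1
      have hsplit := Finset.card_filter_add_card_filter_not
        (s := S) (p := fun u => u 1 = v 1)
      set S' := S.filter (fun u => ¬ u 1 = v 1) with hS'def
      have key := ih ![c 0, (c 1).erase (v 1)] ?_ S' ?_ ?_
      rotate_left
      · simp only [Matrix.cons_val_zero, Matrix.cons_val_one, Matrix.head_cons]
        rw [Finset.card_erase_of_mem hb1]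
        clear hlt hlt1 hsplit hcube hmem ih
        omega
      · intro B hB hpc
        exact hcube B (hB.trans (Finset.coe_subset.mpr (Finset.filter_subset _ _))) hpc
      · intro w hw t
        have hwS : w ∈ S := Finset.mem_of_mem_filter w hw
        have hwne : ¬ w 1 = v 1 := (Finset.mem_filter.mp hw).2
        fin_cases t
        · simpa using hmem w hwS 0
        · simp only [Matrix.cons_val_one, Matrix.head_cons]
          exact Finset.mem_erase.mpr ⟨hwne, hmem w hwS 1⟩
      simp only [Matrix.cons_val_zero, Matrix.cons_val_one, Matrix.head_cons] at key
      rw [Finset.card_erase_of_mem hb1] at key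
      have hmine : min ((c 1).card - 1) ℓ = ℓ := min_eq_right (Nat.le_sub_one_of_lt hb)
      rw [hmins, hmine] at key
      rw [hmins, hmins']
      have heq : ℓ * ((c 1).card - 1) + ℓ = ℓ * (c 1).card := by
        obtain ⟨m, hm⟩ : ∃ m, (c 1).card = m + 1 :=
          ⟨(c 1).card - 1, (Nat.succ_pred_eq_of_pos (Nat.lt_of_le_of_lt (Nat.zero_le ℓ) hb)).symm⟩
        rw [hm, Nat.add_sub_cancel, Nat.mul_succ]
      linarith
    · -- line fixes coordinate 0; remove value v 0 from c 0
      have hlt1 : (S.filter (fun u => u 0 = v 0)).card ≤ ℓ := Nat.lt_succ_iff.mp hlt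
      have hb1 : v 0 ∈ c 0 := hmem v hvS 0
      have hsplit := Finset.card_filter_add_card_filter_not
        (s := S) (p := fun u => u 0 = v 0)
      set S' := S.filter (fun u => ¬ u 0 = v 0) with hS'def
      have key := ih ![(c 0).erase (v 0), c 1] ?_ S' ?_ ?_
      rotate_left
      · simp only [Matrix.cons_val_zero, Matrix.cons_val_one, Matrix.head_cons]
        rw [Finset.card_erase_of_mem hb1]
        clear hlt hlt1 hsplit hcube hmem ih
        omega
      · intro B hB hpc
        exact hcube B (hB.trans (Finset.coe_subset.mpr (Finset.filter_subset _ _))) hpc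
      · intro w hw t
        have hwS : w ∈ S := Finset.mem_of_mem_filter w hw
        have hwne : ¬ w 0 = v 0 := (Finset.mem_filter.mp hw).2
        fin_cases t
        · simp only [Matrix.cons_val_zero]
          exact Finset.mem_erase.mpr ⟨hwne, hmem w hwS 0⟩
        · simpa using hmem w hwS 1
      simp only [Matrix.cons_val_zero, Matrix.cons_val_one, Matrix.head_cons] at key
      rw [Finset.card_erase_of_mem hb1] at key
      have hmine : min ((c 0).card - 1) ℓ = ℓ := min_eq_right (Nat.le_sub_one_of_lt ha)
      rw [hmins', hmine] at key
      rw [hmins, hmins']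
      have heq : ℓ * ((c 0).card - 1) + ℓ = ℓ * (c 0).card := by
        obtain ⟨m, hm⟩ : ∃ m, (c 0).card = m + 1 :=
          ⟨(c 0).card - 1, (Nat.succ_pred_eq_of_pos (Nat.lt_of_le_of_lt (Nat.zero_le ℓ) ha)).symm⟩
        rw [hm, Nat.add_sub_cancel, Nat.mul_succ]
      linarith

end DSProofAux

def DSProofAux.eqv (n : ℕ) : { i // i ∈ (Finset.univ : Finset (Fin n)) } ≃ Fin n :=
  Equiv.subtypeUnivEquiv (fun i => Finset.mem_univ i)

/-- If `H ⊆ [k] × [k]` has `ℓ`-DS dimension at most `1` (equivalently, `H` contains no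
`(ℓ+1)`-pseudo-cube), then `|H| ≤ ℓ(2k - ℓ)`. -/
theorem ds_dim_one_bipartite_bound (k ℓ : ℕ) (hℓ : 1 ≤ ℓ) (hk : ℓ ≤ k)
    (H : Finset (Fin 2 → Fin k))
    (hdim : ∀ I : Finset (Fin 2), DSShattered ℓ (H : Set (Fin 2 → Fin k)) I → I.card ≤ 1) :
    H.card ≤ ℓ * (2 * k - ℓ) := by
  set e := DSProofAux.eqv 2 with he
  have hcube : ∀ B : Set (Fin 2 → Fin k), B ⊆ ↑H → ¬ IsPseudoCube (ℓ + 1) B := by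
    intro B hB hpc
    have hsh : DSShattered ℓ (H : Set (Fin 2 → Fin k)) (Finset.univ : Finset (Fin 2)) := by
      refine ⟨(fun f => f ∘ e) '' B, ?_, DSProofAux.isPseudoCube_image_comp e _ B hpc⟩
      rintro _ ⟨f, hf, rfl⟩
      exact ⟨f, hB hf, by funext i; rfl⟩
    have h2 := hdim Finset.univ hsh
    rw [Finset.card_univ, Fintype.card_fin] at h2
    omega
  have key := DSProofAux.main_bound ℓ hℓ (k + k) (fun _ => (Finset.univ : Finset (Fin k)))
    (by simp) H hcube (fun v _ t => Finset.mem_univ _)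
  simp only [Finset.card_univ, Fintype.card_fin] at key
  rw [min_eq_right hk] at key
  have heq : ℓ * (2 * k - ℓ) + ℓ * ℓ = ℓ * (2 * k) := by
    rw [← Nat.mul_add]
    congr 1
    omega
  have h3 : ℓ * (2 * k) = ℓ * k + ℓ * k := by ring
  linarith
end

section
/- Let k and ℓ be natural numbers with ℓ ≥ 1, and let H ⊆ [k] × [k], viewed as the edge set of a bipartite graph with both sides indexed by [k]. Then H contains no (ℓ+1)-pseudo-cube (as a subset of [k]^2) if and only if every nonempty subset H' ⊆ H contains a vertex of degree at most ℓ, i.e., there exists (a,b) ∈ H' such that |{b' ∈ [k] : (a,b') ∈ H'}| ≤ ℓ or |{a' ∈ [k] : (a',b) ∈ H'}| ≤ ℓ. -/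
/-!
Every subset of the finite set `H` is finite, and for a finite `B` the pseudo-cube condition at
`v` in direction `i` just says that the axis-parallel line through `v` in direction `i` contains
more than `ℓ` points of `B`. In `[k]^2` the two lines through `v` are the neighbourhoods of the
endpoints `v 1` and `v 0` of the edge `v`, so `B` fails to be an `(ℓ+1)`-pseudo-cube exactly when
some edge of `B` has an endpoint of degree at most `ℓ`.
-/

open Finset

theorem forall_subset_coe_iff {β : Type*} {H : Finset β} {P : Set β → Prop} :
    (∀ B ⊆ (H : Set β), P B) ↔ ∀ B ⊆ H, P (B : Set β) := by
  refine ⟨fun h B hB ↦ h B (coe_subset.2 hB), fun h B hB ↦ ?_⟩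
  obtain ⟨B, rfl⟩ := (H.finite_toSet.subset hB).exists_finset_coe
  exact h B (coe_subset.1 hB)

section PseudoCube

variable {ι α : Type*}

open scoped Classical in
noncomputable def lineThrough (B : Finset (ι → α)) (i : ι) (v : ι → α) : Finset (ι → α) :=
  {u ∈ B | ∀ j ≠ i, u j = v j}

theorem mem_lineThrough {B : Finset (ι → α)} {i : ι} {v u : ι → α} :
    u ∈ lineThrough B i v ↔ u ∈ B ∧ ∀ j ≠ i, u j = v j := by
  classical
  simp [lineThrough]

theorem self_mem_lineThrough {B : Finset (ι → α)} {v : ι → α} (hv : v ∈ B) (i : ι) :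
    v ∈ lineThrough B i v :=
  mem_lineThrough.2 ⟨hv, fun _ _ ↦ rfl⟩

theorem exists_companions_iff_lt_card_lineThrough (ℓ : ℕ) {B : Finset (ι → α)}
    {v : ι → α} (hv : v ∈ B) (i : ι) :
    (∃ U : Finset (ι → α), #U = ℓ ∧ ∀ u ∈ U, u ∈ (B : Set (ι → α)) ∧ u ≠ v ∧
      ∀ j, j ≠ i → u j = v j) ↔ ℓ < #(lineThrough B i v) := by
  classical
  have hv' := self_mem_lineThrough hv i
  calc (∃ U : Finset (ι → α), #U = ℓ ∧ ∀ u ∈ U, u ∈ (B : Set (ι → α)) ∧ u ≠ v ∧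
        ∀ j, j ≠ i → u j = v j)
      ↔ ∃ U ⊆ (lineThrough B i v).erase v, #U = ℓ := by
        refine exists_congr fun U ↦ ?_
        simp only [subset_iff, mem_erase, mem_lineThrough, mem_coe]
        grind
    _ ↔ ℓ ≤ #((lineThrough B i v).erase v) := le_card_iff_exists_subset_card.symm
    _ ↔ ℓ < #(lineThrough B i v) := by
        have := card_pos.2 ⟨v, hv'⟩
        rw [card_erase_of_mem hv']
        omega

theorem isPseudoCube_succ_coe_iff (ℓ : ℕ) (B : Finset (ι → α)) :
    IsPseudoCube (ℓ + 1) (B : Set (ι → α)) ↔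
      B.Nonempty ∧ ∀ v ∈ B, ∀ i, ℓ < #(lineThrough B i v) := by
  simp only [IsPseudoCube, coe_nonempty, mem_coe, Nat.add_sub_cancel]
  refine and_congr_right fun _ ↦ forall₂_congr fun v hv ↦ forall_congr' fun i ↦ ?_
  exact exists_companions_iff_lt_card_lineThrough ℓ hv i

theorem lineThrough_zero [DecidableEq α] (B : Finset (Fin 2 → α)) (v : Fin 2 → α) :
    lineThrough B 0 v = B.filter fun u ↦ u 1 = v 1 := by
  ext u
  simp [mem_lineThrough, Fin.forall_fin_two]

theorem lineThrough_one [DecidableEq α] (B : Finset (Fin 2 → α)) (v : Fin 2 → α) :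
    lineThrough B 1 v = B.filter fun u ↦ u 0 = v 0 := by
  ext u
  simp [mem_lineThrough, Fin.forall_fin_two]

end PseudoCube

theorem no_pseudocube_iff_degenerate_general (k ℓ : ℕ) (H : Finset (Fin 2 → Fin k)) :
    (∀ B : Set (Fin 2 → Fin k), B ⊆ (H : Set (Fin 2 → Fin k)) → ¬ IsPseudoCube (ℓ + 1) B) ↔
    (∀ H' : Finset (Fin 2 → Fin k), H' ⊆ H → H'.Nonempty →
      ∃ v ∈ H', (H'.filter fun u => u 0 = v 0).card ≤ ℓ ∨
        (H'.filter fun u => u 1 = v 1).card ≤ ℓ) := by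
  rw [forall_subset_coe_iff]
  refine forall₂_congr fun H' _ ↦ ?_
  simp only [isPseudoCube_succ_coe_iff, Fin.forall_fin_two, lineThrough_zero, lineThrough_one,
    not_and, not_forall, not_lt, exists_prop]
  grind

/-- For `H ⊆ [k]^2` viewed as the edge set of a bipartite graph with both sides indexed
by `[k]` (an element `v ∈ H` being the edge `(v 0, v 1)`): `H` contains no
`(ℓ+1)`-pseudo-cube iff every nonempty subset `H' ⊆ H` contains an edge one of whose
endpoints has degree at most `ℓ` in `H'`. -/
theorem no_pseudocube_iff_degenerate (k ℓ : ℕ) (hℓ : 1 ≤ ℓ) (H : Finset (Fin 2 → Fin k)) :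
    (∀ B : Set (Fin 2 → Fin k), B ⊆ (H : Set (Fin 2 → Fin k)) → ¬ IsPseudoCube (ℓ + 1) B) ↔
    (∀ H' : Finset (Fin 2 → Fin k), H' ⊆ H → H'.Nonempty →
      ∃ v ∈ H', (H'.filter fun u => u 0 = v 0).card ≤ ℓ ∨
        (H'.filter fun u => u 1 = v 1).card ≤ ℓ) :=
  no_pseudocube_iff_degenerate_general k ℓ H
end

section
/- Let k and n be natural numbers with k ≥ 1, and let H ⊆ [k]^n be a class whose 1-DS dimension is at most 1. Then |H| ≤ 1 + n·(k−1). -/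
/-- `H` contains no 2-pseudo-cube in any 2-coordinate projection (abstract grid form). -/
def NoGrid {n k : ℕ} (H : Finset (Fin n → Fin k)) : Prop :=
  ∀ i j : Fin n, i ≠ j → ∀ B : Finset (Fin k × Fin k), B.Nonempty →
    (∀ p ∈ B, ∃ h ∈ H, h i = p.1 ∧ h j = p.2) →
    (∀ p ∈ B, ∃ q ∈ B, q.1 = p.1 ∧ q.2 ≠ p.2) →
    (∀ p ∈ B, ∃ q ∈ B, q.2 = p.2 ∧ q.1 ≠ p.1) → False

/-- Grid lemma: a pseudo-cube-free column structure is a "hyperforest". -/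
lemma grid_bound {k : ℕ} (S : Fin k → Finset (Fin k)) :
    ∀ C : Finset (Fin k), (∀ a ∈ C, (S a).Nonempty) →
    (∀ B : Finset (Fin k × Fin k), B.Nonempty →
      (∀ p ∈ B, p.1 ∈ C ∧ p.2 ∈ S p.1) →
      (∀ p ∈ B, ∃ q ∈ B, q.1 = p.1 ∧ q.2 ≠ p.2) →
      (∀ p ∈ B, ∃ q ∈ B, q.2 = p.2 ∧ q.1 ≠ p.1) → False) →
    ∑ a ∈ C, ((S a).card - 1) ≤ (C.biUnion S).card - 1 := by
  intro C
  induction C using Finset.strongInduction with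
  | _ C ih =>
    intro hne hnoB
    rcases C.eq_empty_or_nonempty with rfl | hC
    · simp
    by_cases hleaf : ∃ a0 ∈ C, ((S a0) ∩ ((C.erase a0).biUnion S)).card ≤ 1
    · obtain ⟨a0, ha0, hinter⟩ := hleaf
      have hsub : C.erase a0 ⊂ C := Finset.erase_ssubset ha0
      have IH := ih _ hsub (fun a ha => hne a (Finset.mem_of_mem_erase ha))
        (fun B h1 h2 h3 h4 => hnoB B h1
          (fun p hp => ⟨Finset.mem_of_mem_erase (h2 p hp).1, (h2 p hp).2⟩) h3 h4)
      have hsum : ∑ a ∈ C, ((S a).card - 1)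
          = ((S a0).card - 1) + ∑ a ∈ C.erase a0, ((S a).card - 1) :=
        (Finset.add_sum_erase C _ ha0).symm
      have hUeq : C.biUnion S = S a0 ∪ (C.erase a0).biUnion S := by
        conv_lhs => rw [← Finset.insert_erase ha0]
        rw [Finset.biUnion_insert]
      have hcard : (C.biUnion S).card + (S a0 ∩ (C.erase a0).biUnion S).card
          = (S a0).card + ((C.erase a0).biUnion S).card := by
        rw [hUeq]; exact Finset.card_union_add_card_inter _ _
      have h1 : 1 ≤ (S a0).card := Finset.card_pos.mpr (hne a0 ha0)
      have h2 : (S a0 ∩ (C.erase a0).biUnion S).card ≤ ((C.erase a0).biUnion S).card :=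
        Finset.card_le_card (Finset.inter_subset_right)
      omega
    · push_neg at hleaf
      have hleaf' : ∀ a ∈ C, 2 ≤ ((S a) ∩ ((C.erase a).biUnion S)).card := fun a ha => hleaf a ha
      set B : Finset (Fin k × Fin k) :=
        (C ×ˢ (Finset.univ : Finset (Fin k))).filter
          (fun p => p.2 ∈ S p.1 ∧ ∃ a' ∈ C.erase p.1, p.2 ∈ S a') with hBdef
      have hmemB : ∀ p, p ∈ B ↔ p.1 ∈ C ∧ p.2 ∈ S p.1 ∧ ∃ a' ∈ C.erase p.1, p.2 ∈ S a' := by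
        intro p
        simp [hBdef, Finset.mem_filter, Finset.mem_product, and_assoc]
      exfalso
      apply hnoB B
      · -- nonempty
        obtain ⟨a, ha⟩ := hC
        have : 0 < ((S a) ∩ ((C.erase a).biUnion S)).card := by
          have := hleaf' a ha; omega
        obtain ⟨b, hb⟩ := Finset.card_pos.mp this
        rw [Finset.mem_inter, Finset.mem_biUnion] at hb
        exact ⟨(a, b), (hmemB (a, b)).mpr ⟨ha, hb.1, hb.2⟩⟩
      · intro p hp
        have := (hmemB p).mp hp
        exact ⟨this.1, this.2.1⟩
      · -- vertical neighbor
        intro p hp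
        have hpC := ((hmemB p).mp hp).1
        have htwo := hleaf' p.1 hpC
        have hlt : 1 < ((S p.1) ∩ ((C.erase p.1).biUnion S)).card := by omega
        obtain ⟨b1, hb1, b2, hb2, hb12⟩ := Finset.one_lt_card.mp hlt
        have hmk : ∀ b, b ∈ (S p.1) ∩ ((C.erase p.1).biUnion S) → (p.1, b) ∈ B := by
          intro b hb
          rw [Finset.mem_inter, Finset.mem_biUnion] at hb
          exact (hmemB (p.1, b)).mpr ⟨hpC, hb.1, hb.2⟩
        by_cases hb1p : b1 = p.2
        · exact ⟨(p.1, b2), hmk b2 hb2, rfl, by rw [← hb1p]; exact Ne.symm hb12⟩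
        · exact ⟨(p.1, b1), hmk b1 hb1, rfl, hb1p⟩
      · -- horizontal neighbor
        intro p hp
        obtain ⟨hpC, hpS, a', ha', hpa'⟩ := (hmemB p).mp hp
        have ha'ne : a' ≠ p.1 := (Finset.mem_erase.mp ha').1
        have ha'C : a' ∈ C := (Finset.mem_erase.mp ha').2
        refine ⟨(a', p.2), (hmemB (a', p.2)).mpr ⟨ha'C, hpa', p.1, ?_, hpS⟩, rfl, ha'ne⟩
        exact Finset.mem_erase.mpr ⟨Ne.symm ha'ne, hpC⟩

lemma arith_aux {x c a : ℕ} (h : x ≤ c + a) (hc : 1 ≤ c) : x ≤ 1 + (a + (c - 1)) := by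
  omega

lemma aux_bound (k : ℕ) : ∀ (n : ℕ) (H : Finset (Fin n → Fin k)), NoGrid H →
    H.card ≤ 1 + ∑ j : Fin n, ((H.image (fun h => h j)).card - 1) := by
  intro n
  induction n with
  | zero =>
    intro H _
    simp only [Finset.univ_eq_empty, Finset.sum_empty]
    have : H.card ≤ 1 := Finset.card_le_one.mpr (fun a _ b _ => funext (fun i => i.elim0))
    omega
  | succ n ihn =>
    intro H hng
    rcases H.eq_empty_or_nonempty with rfl | hHne
    · simp
    set C : Finset (Fin k) := H.image (fun h => h (Fin.last n)) with hCdef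
    set res : (Fin (n + 1) → Fin k) → (Fin n → Fin k) := fun h => h ∘ Fin.castSucc with hres
    set fib : Fin k → Finset (Fin (n + 1) → Fin k) :=
      fun a => H.filter (fun h => h (Fin.last n) = a) with hfib
    set Ha : Fin k → Finset (Fin n → Fin k) := fun a => (fib a).image res with hHa
    have hcard : H.card = ∑ a ∈ C, (fib a).card :=
      Finset.card_eq_sum_card_fiberwise (fun h hh => Finset.mem_image_of_mem _ hh)
    have hfibcard : ∀ a, (Ha a).card = (fib a).card := by
      intro a
      apply Finset.card_image_of_injOn
      intro h1 h1m h2 h2m hre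
      funext i
      refine Fin.lastCases ?_ ?_ i
      · rw [(Finset.mem_filter.mp h1m).2, (Finset.mem_filter.mp h2m).2]
      · intro i; exact congrFun hre i
    have hng' : ∀ a, NoGrid (Ha a) := by
      intro a i j hij B hBne hmem hv hh
      refine hng (Fin.castSucc i) (Fin.castSucc j)
        (fun e => hij (Fin.castSucc_injective n e)) B hBne ?_ hv hh
      intro p hp
      obtain ⟨g, hg, hgi, hgj⟩ := hmem p hp
      obtain ⟨h, hh', rfl⟩ := Finset.mem_image.mp hg
      exact ⟨h, (Finset.mem_filter.mp hh').1, hgi, hgj⟩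
    -- grid bound for each coordinate j0
    have hgrid : ∀ j0 : Fin n,
        ∑ a ∈ C, (((Ha a).image (fun g => g j0)).card - 1)
          ≤ (H.image (fun h => h (Fin.castSucc j0))).card - 1 := by
      intro j0
      have hne : ∀ a ∈ C, ((Ha a).image (fun g => g j0)).Nonempty := by
        intro a ha
        obtain ⟨h, hh, hha⟩ := Finset.mem_image.mp ha
        exact ⟨h (Fin.castSucc j0), Finset.mem_image.mpr ⟨res h,
          Finset.mem_image_of_mem _ (Finset.mem_filter.mpr ⟨hh, hha⟩), rfl⟩⟩
      have hnoB : ∀ B : Finset (Fin k × Fin k), B.Nonempty →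
          (∀ p ∈ B, p.1 ∈ C ∧ p.2 ∈ (Ha p.1).image (fun g => g j0)) →
          (∀ p ∈ B, ∃ q ∈ B, q.1 = p.1 ∧ q.2 ≠ p.2) →
          (∀ p ∈ B, ∃ q ∈ B, q.2 = p.2 ∧ q.1 ≠ p.1) → False := by
        intro B hBne hmem hv hh
        refine hng (Fin.last n) (Fin.castSucc j0)
          (Ne.symm (Fin.castSucc_lt_last j0).ne) B hBne ?_ hv hh
        intro p hp
        obtain ⟨g, hg, hgj⟩ := Finset.mem_image.mp (hmem p hp).2
        obtain ⟨h, hh', rfl⟩ := Finset.mem_image.mp hg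
        exact ⟨h, (Finset.mem_filter.mp hh').1, (Finset.mem_filter.mp hh').2, hgj⟩
      have hb := grid_bound (fun a => (Ha a).image (fun g => g j0)) C hne hnoB
      refine le_trans hb ?_
      have hsub : C.biUnion (fun a => (Ha a).image (fun g => g j0))
          ⊆ H.image (fun h => h (Fin.castSucc j0)) := by
        intro b hb'
        obtain ⟨a, _, hb''⟩ := Finset.mem_biUnion.mp hb'
        obtain ⟨g, hg, hgj⟩ := Finset.mem_image.mp hb''
        obtain ⟨h, hh', rfl⟩ := Finset.mem_image.mp hg
        exact Finset.mem_image.mpr ⟨h, (Finset.mem_filter.mp hh').1, hgj⟩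
      exact Nat.sub_le_sub_right (Finset.card_le_card hsub) 1
    -- assemble
    have hIH : ∀ a ∈ C, (fib a).card
        ≤ 1 + ∑ j : Fin n, (((Ha a).image (fun g => g j)).card - 1) := by
      intro a _
      rw [← hfibcard a]
      exact ihn (Ha a) (hng' a)
    have hCpos : 1 ≤ C.card := Finset.card_pos.mpr (hHne.image _)
    have step1 : H.card ≤ C.card + ∑ a ∈ C, ∑ j : Fin n, (((Ha a).image (fun g => g j)).card - 1) := by
      rw [hcard]
      calc ∑ a ∈ C, (fib a).card
          ≤ ∑ a ∈ C, (1 + ∑ j : Fin n, (((Ha a).image (fun g => g j)).card - 1)) :=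
            Finset.sum_le_sum hIH
        _ = C.card + ∑ a ∈ C, ∑ j : Fin n, (((Ha a).image (fun g => g j)).card - 1) := by
            rw [Finset.sum_add_distrib, Finset.sum_const, smul_eq_mul, mul_one]
    have step2 : ∑ a ∈ C, ∑ j : Fin n, (((Ha a).image (fun g => g j)).card - 1)
        ≤ ∑ j : Fin n, ((H.image (fun h => h (Fin.castSucc j))).card - 1) := by
      rw [Finset.sum_comm]
      exact Finset.sum_le_sum (fun j _ => hgrid j)
    have hsplit : ∑ j : Fin (n + 1), ((H.image (fun h => h j)).card - 1)
        = (∑ j : Fin n, ((H.image (fun h => h (Fin.castSucc j))).card - 1))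
          + ((H.image (fun h => h (Fin.last n))).card - 1) := by
      rw [Fin.sum_univ_castSucc]
    rw [hsplit]
    have hCeq : C.card = (H.image (fun h => h (Fin.last n))).card := rfl
    have hb : H.card ≤ C.card + ∑ j : Fin n, ((H.image (fun h => h (Fin.castSucc j))).card - 1) :=
      le_trans step1 (Nat.add_le_add_left step2 _)
    rw [← hCeq]
    generalize (∑ j : Fin n, ((H.image (fun h => h (Fin.castSucc j))).card - 1)) = A at hb ⊢
    exact arith_aux hb hCpos

/-- If `k ≥ 1` and `H ⊆ [k]^n` has `1`-DS dimension at most `1`, then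
`|H| ≤ 1 + n(k-1)`. -/
theorem ds_dim_one_bound (k n : ℕ) (hk : 1 ≤ k) (H : Finset (Fin n → Fin k))
    (hdim : ∀ I : Finset (Fin n), DSShattered 1 (H : Set (Fin n → Fin k)) I → I.card ≤ 1) :
    H.card ≤ 1 + n * (k - 1) := by
  have hng : NoGrid H := by
    intro i j hij B hBne hmem hv hh
    set I : Finset (Fin n) := {i, j} with hIdef
    have hiI : i ∈ I := by simp [hIdef]
    have hjI : j ∈ I := by simp [hIdef]
    have hmemI : ∀ x : Fin n, x ∈ I → x = i ∨ x = j := by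
      intro x hx
      simpa [hIdef] using hx
    set e : Fin k × Fin k → ({ x // x ∈ I } → Fin k) :=
      fun p x => if x.1 = i then p.1 else p.2 with hedef
    have hshat : DSShattered 1 (H : Set (Fin n → Fin k)) I := by
      refine ⟨e '' ↑B, ?_, ?_, ?_⟩
      · rintro v ⟨p, hp, rfl⟩
        obtain ⟨h, hH, h1, h2⟩ := hmem p (by exact_mod_cast hp)
        refine ⟨h, by exact_mod_cast hH, funext fun x => ?_⟩
        rcases hmemI x.1 x.2 with hx | hx
        · simp [hedef, hx, h1]
        · have hxi : x.1 ≠ i := by rw [hx]; exact Ne.symm hij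
          simp [hedef, hx, hxi, Ne.symm hij, h2]
      · obtain ⟨p, hp⟩ := hBne
        exact ⟨e p, ⟨p, by exact_mod_cast hp, rfl⟩⟩
      · rintro v ⟨p, hp, rfl⟩ d
        have hpB : p ∈ B := by exact_mod_cast hp
        rcases hmemI d.1 d.2 with hd | hd
        · -- direction i : use horizontal neighbor
          obtain ⟨q, hq, hq2, hq1⟩ := hh p hpB
          refine ⟨{e q}, by simp, ?_⟩
          intro u hu
          rw [Finset.mem_singleton] at hu
          subst hu
          refine ⟨⟨q, by exact_mod_cast hq, rfl⟩, ?_, ?_⟩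
          · intro heq
            have := congrFun heq ⟨i, hiI⟩
            simp [hedef] at this
            exact hq1 this
          · intro x hx
            rcases hmemI x.1 x.2 with hx' | hx'
            · exfalso; exact hx (Subtype.ext (hx'.trans hd.symm))
            · have hxi : x.1 ≠ i := by rw [hx']; exact Ne.symm hij
              simp [hedef, hxi, hq2]
        · -- direction j : use vertical neighbor
          obtain ⟨q, hq, hq1, hq2⟩ := hv p hpB
          refine ⟨{e q}, by simp, ?_⟩
          intro u hu
          rw [Finset.mem_singleton] at hu
          subst hu
          refine ⟨⟨q, by exact_mod_cast hq, rfl⟩, ?_, ?_⟩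
          · intro heq
            have := congrFun heq ⟨j, hjI⟩
            simp [hedef, Ne.symm hij] at this
            exact hq2 this
          · intro x hx
            rcases hmemI x.1 x.2 with hx' | hx'
            · simp [hedef, hx', hq1]
            · exfalso; exact hx (Subtype.ext (hx'.trans hd.symm))
    have hcard2 : I.card = 2 := Finset.card_pair hij
    have := hdim I hshat
    omega
  have h1 := aux_bound k n H hng
  have h2 : ∀ j : Fin n, (H.image (fun h => h j)).card - 1 ≤ k - 1 := by
    intro j
    have : (H.image (fun h => h j)).card ≤ k := by
      calc (H.image (fun h => h j)).card ≤ (Finset.univ : Finset (Fin k)).card :=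
            Finset.card_le_univ _
        _ = k := by simp
    exact Nat.sub_le_sub_right this 1
  calc H.card ≤ 1 + ∑ j : Fin n, ((H.image (fun h => h j)).card - 1) := h1
    _ ≤ 1 + ∑ _j : Fin n, (k - 1) := by
        exact Nat.add_le_add_left (Finset.sum_le_sum (fun j _ => h2 j)) 1
    _ = 1 + n * (k - 1) := by
        rw [Finset.sum_const, smul_eq_mul, Finset.card_univ, Fintype.card_fin]
end

section
/- For all natural numbers k, d, ℓ with ℓ ≥ 1, every ℓ-pseudo-cube B ⊆ [k]^d satisfies |B| ≥ ℓ^d. -/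
theorem Set.mul_ncard_image_le_ncard {α β : Type*} {f : α → β} {s : Set α} (hs : s.Finite)
    {n : ℕ} (hn : ∀ b ∈ f '' s, n ≤ (s ∩ f ⁻¹' {b}).ncard) :
    n * (f '' s).ncard ≤ s.ncard := by
  classical
  lift s to Finset α using hs
  rw [← Finset.coe_image, Set.ncard_coe_finset, Set.ncard_coe_finset]
  refine Finset.mul_card_image_le_card s n fun b hb => ?_
  rw [← Set.ncard_coe_finset, Finset.coe_filter]
  exact hn b (by simpa using hb)

theorem Set.domRestrict_compl_singleton_eq_iff {ι α : Type*} {i : ι} {u v : ι → α} :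
    ({i}ᶜ : Set ι).domRestrict u = ({i}ᶜ : Set ι).domRestrict v ↔
      ∀ j, j ≠ i → u j = v j :=
  Set.domRestrict_eq_domRestrict_iff

theorem eq_of_apply_eq_of_domRestrict_compl_singleton_eq {ι α : Type*} {i : ι} {u v : ι → α}
    (hi : u i = v i) (h : ({i}ᶜ : Set ι).domRestrict u = ({i}ᶜ : Set ι).domRestrict v) :
    u = v := by
  funext j
  by_cases hj : j = i
  · exact hj ▸ hi
  · exact Set.domRestrict_compl_singleton_eq_iff.1 h j hj

namespace IsPseudoCube

variable {ι α : Type*} {ℓ : ℕ} {B : Set (ι → α)}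

theorem le_ncard_line (hB : IsPseudoCube ℓ B) (hfin : B.Finite) {v : ι → α} (hv : v ∈ B)
    (i : ι) : ℓ ≤ {u ∈ B | ∀ j, j ≠ i → u j = v j}.ncard := by
  classical
  obtain ⟨U, hUcard, hU⟩ := hB.2 v hv i
  have hvU : v ∉ U := fun h => (hU v h).2.1 rfl
  have hsub : (↑(insert v U) : Set (ι → α)) ⊆ {u ∈ B | ∀ j, j ≠ i → u j = v j} := by
    intro u hu
    rcases Finset.mem_insert.1 hu with rfl | hu
    · exact ⟨hv, fun _ _ => rfl⟩
    · exact ⟨(hU u hu).1, (hU u hu).2.2⟩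
  calc ℓ ≤ (insert v U).card := by rw [Finset.card_insert_of_notMem hvU, hUcard]; omega
    _ = (↑(insert v U) : Set (ι → α)).ncard := (Set.ncard_coe_finset _).symm
    _ ≤ _ := Set.ncard_le_ncard hsub (hfin.subset fun _ h => h.1)

theorem image_domRestrict_compl_singleton (hB : IsPseudoCube ℓ B) (i : ι) :
    IsPseudoCube ℓ (({i}ᶜ : Set ι).domRestrict '' B) := by
  classical
  refine ⟨hB.1.image _, ?_⟩
  rintro _ ⟨v, hv, rfl⟩ j
  obtain ⟨U, hUcard, hU⟩ := hB.2 v hv j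
  have hji : i ≠ j := fun h => j.2 h.symm
  have hUi : ∀ u ∈ U, u i = v i := fun u hu => (hU u hu).2.2 i hji
  refine ⟨U.image ({i}ᶜ : Set ι).domRestrict, ?_, ?_⟩
  · rw [Finset.card_image_of_injOn, hUcard]
    intro u hu w hw huw
    exact eq_of_apply_eq_of_domRestrict_compl_singleton_eq ((hUi u hu).trans (hUi w hw).symm) huw
  · simp only [Finset.mem_image]
    rintro _ ⟨u, hu, rfl⟩
    obtain ⟨huB, huv, hagree⟩ := hU u hu
    refine ⟨⟨u, huB, rfl⟩, fun h => huv (eq_of_apply_eq_of_domRestrict_compl_singleton_eq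
      (hUi u hu) h), fun j' hj' => hagree j' fun h => hj' (Subtype.ext h)⟩

theorem mul_ncard_image_domRestrict_compl_singleton_le (hB : IsPseudoCube ℓ B) (hfin : B.Finite)
    (i : ι) : ℓ * (({i}ᶜ : Set ι).domRestrict '' B).ncard ≤ B.ncard := by
  refine Set.mul_ncard_image_le_ncard hfin ?_
  rintro _ ⟨v, hv, rfl⟩
  convert hB.le_ncard_line hfin hv i using 2
  ext u
  exact and_congr_right fun _ => Set.domRestrict_compl_singleton_eq_iff

theorem pow_card_le_ncard [Finite ι] (hB : IsPseudoCube ℓ B) (hfin : B.Finite) :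
    ℓ ^ Nat.card ι ≤ B.ncard := by
  induction hd : Nat.card ι generalizing ι with
  | zero => rw [pow_zero]; exact hB.1.ncard_pos hfin
  | succ d ih =>
    obtain ⟨i⟩ : Nonempty ι := (Nat.card_pos_iff.1 (by omega)).1
    have hcard : Nat.card ({i}ᶜ : Set ι) = d := by
      rw [Nat.card_coe_set_eq, Set.ncard_compl, Set.ncard_singleton, hd, Nat.add_sub_cancel]
    calc ℓ ^ (d + 1) = ℓ * ℓ ^ d := pow_succ' ℓ d
      _ ≤ ℓ * (({i}ᶜ : Set ι).domRestrict '' B).ncard :=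
        Nat.mul_le_mul_left ℓ (ih (hB.image_domRestrict_compl_singleton i) (hfin.image _) hcard)
      _ ≤ B.ncard := hB.mul_ncard_image_domRestrict_compl_singleton_le hfin i

end IsPseudoCube

theorem pseudocube_card_lower_bound_general (k d ℓ : ℕ)
    (B : Set (Fin d → Fin k)) (hB : IsPseudoCube ℓ B) :
    ℓ ^ d ≤ B.ncard := by
  simpa using hB.pow_card_le_ncard B.toFinite

/-- Every `ℓ`-pseudo-cube `B ⊆ [k]^d` has at least `ℓ^d` elements. -/
theorem pseudocube_card_lower_bound (k d ℓ : ℕ) (hℓ : 1 ≤ ℓ)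
    (B : Set (Fin d → Fin k)) (hB : IsPseudoCube ℓ B) :
    ℓ ^ d ≤ B.ncard :=
  pseudocube_card_lower_bound_general k d ℓ B hB
end

section
/- Let k, n, ℓ, d be natural numbers with ℓ ≥ 1, and let H ⊆ [k]^n be a nonempty class whose ℓ-DS dimension is at most d. View H as a subset of ℝ^n. Then the real vector space of all functions from H to ℝ is spanned by the restrictions to H of the monomials x_1^{e_1}·x_2^{e_2}⋯x_n^{e_n} whose exponent vectors (e_1,…,e_n) satisfy 0 ≤ e_i ≤ k−1 for every i and |{i : e_i ≥ ℓ}| ≤ d. -/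
/-!
Suppose a nonzero functional `φ` on `H → ℝ` kills every admissible monomial. Monomials with all
exponents `< k` span everything (products of Lagrange indicators), so `φ` is nonzero on some such
monomial `x^e`; take one with the fewest exponents `≥ ℓ`, and let `I` be their positions, so that
`|I| > d`. Feeding `φ` the functions of the `I`-coordinates multiplied by `∏_{i ∉ I} x_i ^ e_i`
gives a nonzero functional `ψ` on `[k]^I` which, by minimality, kills every monomial with some
exponent `< ℓ`. The support of `ψ` lies in the projection of `H` and is an `(ℓ+1)`-pseudo-cube: if
a line through a support point `v` met the support in at most `ℓ` points, interpolating along it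
would produce a combination of such monomials that equals the indicator of `v` on the support,
and `ψ` of it would be `ψ(δ_v) ≠ 0`. So `I` is `ℓ`-DS-shattered, contradicting `|I| > d`.
-/

open Finset Polynomial

namespace Lagrange

variable {F ι : Type*} [Field F] [DecidableEq ι] {s : Finset ι} {v : ι → F} {i j : ι}

theorem eval_basis_eq_ite (hvs : Set.InjOn v s) (hi : i ∈ s) (hj : j ∈ s) :
    (Lagrange.basis s v i).eval (v j) = if j = i then 1 else 0 := by
  split_ifs with hji
  · subst hji
    exact eval_basis_self hvs hi
  · exact eval_basis_of_ne (Ne.symm hji) hj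

theorem lt_card_of_mem_support_basis (hvs : Set.InjOn v s) (hi : i ∈ s) {m : ℕ}
    (hm : m ∈ (Lagrange.basis s v i).support) : m < #s := by
  have := le_natDegree_of_mem_supp m hm
  have := card_pos.mpr ⟨i, hi⟩
  rw [natDegree_basis hvs hi] at *
  omega

end Lagrange

section Monomials

variable {ι : Type*} [Fintype ι] {k : ℕ}

def cubeMonomial (e : ι → ℕ) (x : ι → Fin k) : ℝ :=
  ∏ i, ((x i : ℕ) : ℝ) ^ e i

def largeCoords (ℓ : ℕ) (e : ι → ℕ) : Finset ι :=
  univ.filter fun i => ℓ ≤ e i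

theorem prod_eval_mem_span_cubeMonomial [DecidableEq ι] {α : Type*} (g : α → ι → Fin k)
    (p : ι → ℝ[X]) :
    (fun a => ∏ i, (p i).eval ((g a i : ℕ) : ℝ)) ∈
      Submodule.span ℝ ((fun e => cubeMonomial e ∘ g) '' {e | ∀ i, e i ∈ (p i).support}) := by
  have hexpand : (fun a => ∏ i, (p i).eval ((g a i : ℕ) : ℝ)) =
      ∑ e ∈ Fintype.piFinset fun i => (p i).support,
        (∏ i, (p i).coeff (e i)) • (cubeMonomial e ∘ g) := by
    funext a
    simp only [eval_eq_sum, Polynomial.sum_def, prod_univ_sum, Finset.sum_apply, Pi.smul_apply,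
      Function.comp_apply, cubeMonomial, smul_eq_mul, ← prod_mul_distrib]
  rw [hexpand]
  exact Submodule.sum_mem _ fun e he => Submodule.smul_mem _ _
    (Submodule.subset_span ⟨e, by simpa using he, rfl⟩)

theorem Fin.natCast_val_injective : Function.Injective fun t : Fin k => ((t : ℕ) : ℝ) :=
  Nat.cast_injective.comp Fin.val_injective

theorem span_cubeMonomial_lt_eq_top [DecidableEq ι] (H : Set (ι → Fin k)) :
    Submodule.span ℝ {f : H → ℝ | ∃ e : ι → ℕ, (∀ i, e i < k) ∧ f = fun h => cubeMonomial e h.1}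
      = ⊤ := by
  have : Finite H := Set.toFinite H
  rw [eq_top_iff, ← (Pi.basisFun ℝ H).span_eq, Submodule.span_le]
  rintro _ ⟨x, rfl⟩
  let p : ι → ℝ[X] := fun i => Lagrange.basis univ (fun t : Fin k => ((t : ℕ) : ℝ)) (x.1 i)
  have hsingle : Pi.basisFun ℝ H x = fun h : H => ∏ i, (p i).eval ((h.1 i : ℕ) : ℝ) := by
    funext h
    simp [p, Pi.single_apply, Lagrange.eval_basis_eq_ite Fin.natCast_val_injective.injOn,
      prod_boole, funext_iff, Subtype.ext_iff]
  rw [hsingle]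
  refine Submodule.span_mono ?_ (prod_eval_mem_span_cubeMonomial (fun h : H => h.1) p)
  rintro _ ⟨e, he, rfl⟩
  refine ⟨e, fun i => ?_, rfl⟩
  simpa using Lagrange.lt_card_of_mem_support_basis Fin.natCast_val_injective.injOn
    (mem_univ _) (he i)

theorem cubeMonomial_mul_cubeMonomial_restrict [DecidableEq ι] (I : Finset ι) (e : ι → ℕ)
    (e' : I → ℕ) (x : ι → Fin k) :
    cubeMonomial (fun i => if i ∈ I then 0 else e i) x * cubeMonomial e' (fun i : I => x i) =
      cubeMonomial (fun i => if hi : i ∈ I then e' ⟨i, hi⟩ else e i) x := by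
  rw [cubeMonomial, cubeMonomial, univ_eq_attach, prod_attach_eq_prod_dite, ← prod_mul_distrib]
  refine prod_congr rfl fun i _ => ?_
  by_cases hi : i ∈ I <;> simp [hi]

theorem largeCoords_dite_subset_erase [DecidableEq ι] {ℓ : ℕ} {e : ι → ℕ}
    {e' : largeCoords ℓ e → ℕ} {i₀ : largeCoords ℓ e} (hi₀ : e' i₀ < ℓ) :
    largeCoords ℓ (fun i => if hi : i ∈ largeCoords ℓ e then e' ⟨i, hi⟩ else e i) ⊆
      (largeCoords ℓ e).erase i₀ := by
  intro i hi
  replace hi : ℓ ≤ if hi : i ∈ largeCoords ℓ e then e' ⟨i, hi⟩ else e i := (mem_filter.mp hi).2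
  by_cases hiI : i ∈ largeCoords ℓ e
  · rw [dif_pos hiI] at hi
    refine mem_erase.mpr ⟨fun h => ?_, hiI⟩
    rw [show (⟨i, hiI⟩ : largeCoords ℓ e) = i₀ from Subtype.ext h] at hi
    omega
  · rw [dif_neg hiI] at hi
    exact absurd (mem_filter.mpr ⟨mem_univ i, hi⟩) hiI

end Monomials

theorem LinearMap.apply_eq_sum_mul_single {R α : Type*} [CommSemiring R] [Fintype α]
    [DecidableEq α] (ψ : (α → R) →ₗ[R] R) (G : α → R) :
    ψ G = ∑ w, G w * ψ (Pi.single w 1) := by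
  conv_lhs => rw [← univ_sum_single G]
  refine (map_sum ψ _ _).trans (sum_congr rfl fun w _ => ?_)
  rw [← smul_eq_mul, ← map_smul, ← Pi.single_smul', smul_eq_mul, mul_one]

theorem LinearMap.funLeft_single_eq_zero {R M α β : Type*} [Semiring R] [AddCommMonoid M]
    [Module R M] [DecidableEq β] {g : α → β} {w : β} (hw : w ∉ Set.range g) (c : M) :
    LinearMap.funLeft R M g (Pi.single w c) = 0 := by
  funext a
  rw [LinearMap.funLeft_apply, Pi.zero_apply]
  exact Pi.single_eq_of_ne (M := fun _ => M) (fun h => hw ⟨a, h⟩) c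

section PseudoCube

variable {ι : Type*} [Fintype ι] [DecidableEq ι] {k ℓ : ℕ}

theorem exists_prod_eval_eq_indicator (S : Finset (ι → Fin k)) {v : ι → Fin k} (hv : v ∈ S)
    (i₀ : ι) : ∃ p : ι → ℝ[X], (∀ j, (p j).natDegree < k) ∧
      (p i₀).natDegree < #(S.filter fun u => ∀ j ≠ i₀, u j = v j) ∧
      ∀ w ∈ S, ∏ j, (p j).eval ((w j : ℕ) : ℝ) = if w = v then 1 else 0 := by
  set L := S.filter fun u => ∀ j ≠ i₀, u j = v j
  have hvL : v ∈ L := mem_filter.mpr ⟨hv, fun _ _ => rfl⟩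
  have hinj : Set.InjOn (fun u : ι → Fin k => ((u i₀ : ℕ) : ℝ)) L := by
    intro u hu w hw huw
    simp only [L, mem_coe, mem_filter] at hu hw
    funext j
    by_cases hj : j = i₀
    · exact hj ▸ Fin.natCast_val_injective huw
    · rw [hu.2 j hj, hw.2 j hj]
  have hLk : #L ≤ k := by
    simpa using card_le_card_of_injOn (fun u => u i₀) (fun _ _ => mem_univ _)
      (fun u hu w hw h => hinj hu hw (congrArg (fun t : Fin k => ((t : ℕ) : ℝ)) h))
  have hk : 0 < k := (v i₀).pos
  have hL : 0 < #L := card_pos.mpr ⟨v, hvL⟩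
  let p : ι → ℝ[X] := fun j =>
    if j = i₀ then Lagrange.basis L (fun u : ι → Fin k => ((u i₀ : ℕ) : ℝ)) v
    else Lagrange.basis univ (fun t : Fin k => ((t : ℕ) : ℝ)) (v j)
  refine ⟨p, fun j => ?_, ?_, fun w hw => ?_⟩
  · simp only [p]
    split_ifs
    · rw [Lagrange.natDegree_basis hinj hvL]
      omega
    · rw [Lagrange.natDegree_basis Fin.natCast_val_injective.injOn (mem_univ _), card_univ,
        Fintype.card_fin]
      omega
  · simp only [p, if_pos rfl, Lagrange.natDegree_basis hinj hvL]
    omega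
  have hoff : ∀ j ≠ i₀, (p j).eval ((w j : ℕ) : ℝ) = if w j = v j then 1 else 0 :=
    fun j hj => by simp [p, hj, Lagrange.eval_basis_eq_ite Fin.natCast_val_injective.injOn]
  by_cases hwL : ∀ j ≠ i₀, w j = v j
  · rw [Fintype.prod_eq_single i₀ fun j hj => by rw [hoff j hj, if_pos (hwL j hj)]]
    simpa [p] using Lagrange.eval_basis_eq_ite hinj hvL (mem_filter.mpr ⟨hw, hwL⟩)
  · obtain ⟨j, hj, hwj⟩ : ∃ j ≠ i₀, w j ≠ v j := by simpa using hwL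
    rw [if_neg (by rintro rfl; exact hwj rfl)]
    exact prod_eq_zero (mem_univ j) (by rw [hoff j hj, if_neg hwj])

theorem lt_card_support_inter_line (ψ : ((ι → Fin k) → ℝ) →ₗ[ℝ] ℝ)
    (hkill : ∀ e : ι → ℕ, (∀ i, e i < k) → (∃ i, e i < ℓ) → ψ (cubeMonomial e) = 0)
    {v : ι → Fin k} (hv : ψ (Pi.single v 1) ≠ 0) (i₀ : ι) :
    ℓ < #((univ.filter fun u => ψ (Pi.single u 1) ≠ 0).filter fun u => ∀ j ≠ i₀, u j = v j) := by
  set S := univ.filter fun u => ψ (Pi.single u 1) ≠ 0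
  by_contra! hℓ
  obtain ⟨p, hpk, hpi₀, hpS⟩ := exists_prod_eval_eq_indicator S (by simpa [S] using hv) i₀
  set G : (ι → Fin k) → ℝ := fun w => ∏ j, (p j).eval ((w j : ℕ) : ℝ)
  have hG : ∀ w ∈ S, G w = if w = v then 1 else 0 := hpS
  have hψG : ψ G = ψ (Pi.single v 1) := by
    rw [LinearMap.apply_eq_sum_mul_single, sum_eq_single v]
    · rw [hG v (by simpa [S] using hv), if_pos rfl, one_mul]
    · intro w _ hwv
      by_cases hw : ψ (Pi.single w 1) = 0
      · rw [hw, mul_zero]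
      · rw [hG w (by simpa [S] using hw), if_neg hwv, zero_mul]
    · simp
  have hψG0 : ψ G = 0 := by
    refine (Submodule.span_le (p := LinearMap.ker ψ)).mpr ?_
      (prod_eval_mem_span_cubeMonomial id p)
    rintro _ ⟨e, he, rfl⟩
    have hdeg : ∀ j, e j ≤ (p j).natDegree := fun j => le_natDegree_of_mem_supp _ (he j)
    exact hkill e (fun j => (hdeg j).trans_lt (hpk j)) ⟨i₀, by have := hdeg i₀; omega⟩
  exact hv (hψG ▸ hψG0)

theorem isPseudoCube_support (ψ : ((ι → Fin k) → ℝ) →ₗ[ℝ] ℝ) (hψ : ψ ≠ 0)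
    (hkill : ∀ e : ι → ℕ, (∀ i, e i < k) → (∃ i, e i < ℓ) → ψ (cubeMonomial e) = 0) :
    IsPseudoCube (ℓ + 1) {w | ψ (Pi.single w 1) ≠ 0} := by
  refine ⟨?_, fun v hv i₀ => ?_⟩
  · by_contra hempty
    refine hψ (LinearMap.ext fun G => ?_)
    rw [LinearMap.apply_eq_sum_mul_single, LinearMap.zero_apply]
    refine sum_eq_zero fun w _ => ?_
    rw [show ψ (Pi.single w 1) = 0 from not_not.mp fun hw => hempty ⟨w, hw⟩, mul_zero]
  · set Λ := (univ.filter fun u => ψ (Pi.single u 1) ≠ 0).filter fun u => ∀ j ≠ i₀, u j = v j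
    have hℓ : ℓ ≤ #(Λ.erase v) := by
      have : ℓ < #Λ := lt_card_support_inter_line ψ hkill hv i₀
      have := pred_card_le_card_erase (a := v) (s := Λ)
      omega
    obtain ⟨U, hUΛ, hU⟩ := exists_subset_card_eq hℓ
    refine ⟨U, hU, fun u hu => ?_⟩
    have hu' := hUΛ hu
    obtain ⟨hu_supp, hu_line⟩ := mem_filter.mp (mem_of_mem_erase hu')
    exact ⟨(mem_filter.mp hu_supp).2, ne_of_mem_erase hu', hu_line⟩

end PseudoCube

theorem dsShattered_largeCoords_of_minimal {n k ℓ : ℕ} {H : Set (Fin n → Fin k)}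
    (φ : (H → ℝ) →ₗ[ℝ] ℝ) {e : Fin n → ℕ} (he : ∀ i, e i ≤ k - 1)
    (hφe : φ (fun h => cubeMonomial e h.1) ≠ 0)
    (hmin : ∀ e' : Fin n → ℕ, (∀ i, e' i ≤ k - 1) → #(largeCoords ℓ e') < #(largeCoords ℓ e) →
      φ (fun h => cubeMonomial e' h.1) = 0) :
    DSShattered ℓ H (largeCoords ℓ e) := by
  set I := largeCoords ℓ e
  let glue : (I → ℕ) → Fin n → ℕ := fun e' i => if hi : i ∈ I then e' ⟨i, hi⟩ else e i
  -- `ψ G = φ (x ↦ G (x|_I) · ∏_{i ∉ I} x_i ^ e_i)`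
  let ψ : ((I → Fin k) → ℝ) →ₗ[ℝ] ℝ :=
    φ ∘ₗ LinearMap.mulLeft ℝ (fun h : H => cubeMonomial (fun i => if i ∈ I then 0 else e i) h.1)
      ∘ₗ LinearMap.funLeft ℝ ℝ (fun (h : H) (i : I) => h.1 i)
  have hψ : ∀ e' : I → ℕ, ψ (cubeMonomial e') = φ (fun h => cubeMonomial (glue e') h.1) :=
    fun e' => congrArg φ (funext fun h => cubeMonomial_mul_cubeMonomial_restrict I e e' h.1)
  refine ⟨{w | ψ (Pi.single w 1) ≠ 0}, fun w hw => ?_, isPseudoCube_support ψ ?_ ?_⟩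
  · by_contra hwH
    refine hw ?_
    simp only [ψ, LinearMap.comp_apply]
    rw [LinearMap.funLeft_single_eq_zero (by rintro ⟨h, rfl⟩; exact hwH ⟨h.1, h.2, rfl⟩),
      map_zero, map_zero]
  · intro hψ0
    refine hφe ?_
    have hglue : glue (fun i => e i) = e := by
      funext i
      by_cases hi : i ∈ I <;> simp [glue, hi]
    rw [← hglue, ← hψ (fun i => e i), hψ0, LinearMap.zero_apply]
  · rintro e' he'k ⟨i₀, hi₀⟩
    rw [hψ]
    refine hmin _ (fun i => ?_) ((card_le_card (largeCoords_dite_subset_erase hi₀)).trans_lt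
      (card_erase_lt_of_mem i₀.2))
    by_cases hi : i ∈ I
    · simp only [glue, hi, dite_true]
      have := he'k ⟨i, hi⟩
      omega
    · simp only [glue, hi, dite_false, he]

theorem monomials_span_general (k n ℓ d : ℕ) (H : Set (Fin n → Fin k))
    (hdim : ∀ I : Finset (Fin n), DSShattered ℓ H I → I.card ≤ d) :
    Submodule.span ℝ {f : H → ℝ | ∃ e : Fin n → ℕ,
        (∀ i, e i ≤ k - 1) ∧
        (Finset.univ.filter fun i => ℓ ≤ e i).card ≤ d ∧
        f = fun h : H => ∏ i, ((h.1 i : ℕ) : ℝ) ^ e i} = ⊤ := by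
  rw [← Submodule.dualAnnihilator_eq_bot_iff, Submodule.eq_bot_iff]
  intro φ hφ
  have hgood : ∀ e : Fin n → ℕ, (∀ i, e i ≤ k - 1) → #(largeCoords ℓ e) ≤ d →
      φ (fun h => cubeMonomial e h.1) = 0 :=
    fun e he hd => (Submodule.mem_dualAnnihilator φ).mp hφ _
      (Submodule.subset_span ⟨e, he, hd, rfl⟩)
  by_contra hφ0
  obtain ⟨e₀, he₀⟩ :
      ∃ e : Fin n → ℕ, (∀ i, e i ≤ k - 1) ∧ φ (fun h => cubeMonomial e h.1) ≠ 0 := by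
    by_contra! h
    refine hφ0 (LinearMap.ext_on (span_cubeMonomial_lt_eq_top H) ?_)
    rintro _ ⟨e, he, rfl⟩
    exact h e fun i => Nat.le_sub_one_of_lt (he i)
  obtain ⟨e, ⟨he, hφe⟩, hmin⟩ :=
    (measure fun e : Fin n → ℕ => #(largeCoords ℓ e)).wf.has_min
      {e | (∀ i, e i ≤ k - 1) ∧ φ (fun h => cubeMonomial e h.1) ≠ 0} ⟨e₀, he₀⟩
  have hd : d < #(largeCoords ℓ e) := by
    by_contra! hd
    exact hφe (hgood e he hd)
  have := hdim _ <| dsShattered_largeCoords_of_minimal φ he hφe fun e' he' hlt => by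
    by_contra h
    exact hmin e' ⟨he', h⟩ hlt
  omega

/-- If `H ⊆ [k]^n` is nonempty with `ℓ`-DS dimension at most `d`, then the space of all
real-valued functions on `H` is spanned by the restrictions to `H ⊆ ℝ^n` of the monomials
`x_1^{e_1} ⋯ x_n^{e_n}` with `0 ≤ e_i ≤ k - 1` for all `i` and `e_i ≥ ℓ` for at most `d`
indices `i`. -/
theorem monomials_span (k n ℓ d : ℕ) (hℓ : 1 ≤ ℓ) (H : Set (Fin n → Fin k))
    (hne : H.Nonempty)
    (hdim : ∀ I : Finset (Fin n), DSShattered ℓ H I → I.card ≤ d) :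
    Submodule.span ℝ {f : H → ℝ | ∃ e : Fin n → ℕ,
        (∀ i, e i ≤ k - 1) ∧
        (Finset.univ.filter fun i => ℓ ≤ e i).card ≤ d ∧
        f = fun h : H => ∏ i, ((h.1 i : ℕ) : ℝ) ^ e i} = ⊤ :=
  monomials_span_general k n ℓ d H hdim
end

section
/- Let k, m, ℓ be natural numbers with ℓ ≥ 1, and let H ⊆ [k]^m be a nonempty finite class that is downward closed, meaning that whenever h ∈ H and g ∈ [k]^m satisfy g(i) ≤ h(i) for all i ∈ [m], then g ∈ H. Then savd^ℓ(H) ≤ d_E^ℓ(H). -/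
/-- The edge of the one-inclusion graph of `H` in direction `i` through the vertex `g`:
all `h ∈ H` agreeing with `g` outside coordinate `i`. -/
def edgeOf {m k : ℕ} (H : Finset (Fin m → Fin k)) (i : Fin m) (g : Fin m → Fin k) :
    Finset (Fin m → Fin k) :=
  H.filter fun h => ∀ j, j ≠ i → h j = g j

/-- The edges of the one-inclusion graph of `H`, each recorded together with its
direction: for every direction `i` and every vertex `g ∈ H` we get the (nonempty) edge
`e_{i,f}` where `f` is the restriction of `g` to `[m] \ {i}`. -/
def oigEdges {m k : ℕ} (H : Finset (Fin m → Fin k)) :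
    Finset (Fin m × Finset (Fin m → Fin k)) :=
  (Finset.univ ×ˢ H).image fun p => (p.1, edgeOf H p.1 p.2)

/-- The shifting average `ℓ`-degree of `H`:
`savd^ℓ(H) = (1/|H|) ∑_{e edge of G(H)} max(|e| - ℓ, 0)`. -/
noncomputable def savd {m k : ℕ} (ℓ : ℕ) (H : Finset (Fin m → Fin k)) : ℝ :=
  (H.card : ℝ)⁻¹ * ∑ e ∈ oigEdges H, ((e.2.card - ℓ : ℕ) : ℝ)

/-- The `ℓ`-exponential dimension of `H ⊆ [k]^m`: the largest `d` such that for some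
coordinates `i_1, …, i_d ∈ [m]` the projection of `H` has at least `(ℓ+1)^d` elements. -/
noncomputable def expDim {m k : ℕ} (ℓ : ℕ) (H : Finset (Fin m → Fin k)) : ℕ :=
  sSup {d : ℕ | ∃ t : Fin d → Fin m,
    (ℓ + 1) ^ d ≤ (H.image fun h => fun j => h (t j)).card}

/-! In a downward-closed class the vertices of an edge `e` in direction `i` have `i`-th
coordinates `0, 1, …, |e| - 1`, so `|e| - ℓ` counts the vertices of `e` whose `i`-th coordinate
is at least `ℓ`. Since the edges in direction `i` partition `H`, the numerator of `savd ℓ H` is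
`∑_{h ∈ H} #{i | ℓ ≤ h i}`. For each `h ∈ H` the box `{0, …, ℓ}^S`, `S = {i | ℓ ≤ h i}`, lies
below `h`, hence in `H`, so the projection of `H` onto `S` has at least `(ℓ + 1)^|S|` elements
and `|S| ≤ expDim ℓ H`. -/

open Finset

theorem IsLowerSet.card_sub_eq_card_filter_le {C : Finset ℕ} (hC : IsLowerSet (C : Set ℕ))
    (ℓ : ℕ) : #C - ℓ = #{c ∈ C | ℓ ≤ c} := by
  obtain ⟨a, rfl⟩ : ∃ a, C = range a := by
    rcases hC.eq_univ_or_Iio with h | ⟨a, h⟩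
    · exact absurd (h ▸ C.finite_toSet) Set.infinite_univ
    · exact ⟨a, by rw [← coe_inj, h, coe_range]⟩
  have : {c ∈ range a | ℓ ≤ c} = Ico ℓ a := by
    ext c
    simp only [mem_filter, mem_range, mem_Ico]
    omega
  rw [this, card_range, Nat.card_Ico]

section OneInclusionGraph

variable {m k : ℕ} {H : Finset (Fin m → Fin k)} {i : Fin m} {g h : Fin m → Fin k}

lemma mem_edgeOf : h ∈ edgeOf H i g ↔ h ∈ H ∧ ∀ j, j ≠ i → h j = g j := mem_filter

lemma self_mem_edgeOf (hg : g ∈ H) : g ∈ edgeOf H i g := mem_edgeOf.2 ⟨hg, fun _ _ => rfl⟩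

lemma edgeOf_eq_iff_mem (hh : h ∈ H) : edgeOf H i h = edgeOf H i g ↔ h ∈ edgeOf H i g := by
  refine ⟨fun he => he ▸ self_mem_edgeOf hh, fun hmem => ?_⟩
  have hagree := (mem_edgeOf.1 hmem).2
  ext f
  simp only [mem_edgeOf]
  refine and_congr_right fun _ => forall₂_congr fun j hj => ?_
  rw [hagree j hj]

theorem sum_oigEdges_sum_edgeOf {M : Type*} [AddCommMonoid M]
    (w : Fin m → (Fin m → Fin k) → M) :
    ∑ p ∈ oigEdges H, ∑ h ∈ p.2, w p.1 h = ∑ h ∈ H, ∑ i, w i h := by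
  rw [oigEdges, sum_image' (fun x => w x.1 x.2), sum_product, sum_comm]
  rintro ⟨i, g⟩ -
  have hfiber : {x ∈ (univ : Finset (Fin m)) ×ˢ H | (x.1, edgeOf H x.1 x.2) = (i, edgeOf H i g)}
      = {i} ×ˢ edgeOf H i g := by
    ext ⟨j, h⟩
    simp only [mem_filter, mem_product, mem_univ, true_and, mem_singleton, Prod.mk.injEq]
    constructor
    · rintro ⟨hh, rfl, he⟩
      exact ⟨rfl, (edgeOf_eq_iff_mem hh).1 he⟩
    · rintro ⟨rfl, hmem⟩
      exact ⟨(mem_edgeOf.1 hmem).1, rfl, (edgeOf_eq_iff_mem (mem_edgeOf.1 hmem).1).2 hmem⟩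
  rw [hfiber, sum_product, sum_singleton]

theorem card_edgeOf_sub (hH : IsLowerSet (H : Set (Fin m → Fin k))) (ℓ : ℕ) :
    #(edgeOf H i g) - ℓ = #{h ∈ edgeOf H i g | ℓ ≤ (h i : ℕ)} := by
  have hinj : Set.InjOn (fun h : Fin m → Fin k => (h i : ℕ)) (edgeOf H i g) := by
    intro a ha b hb hab
    funext j
    by_cases hj : j = i
    · exact hj ▸ Fin.ext hab
    · rw [(mem_edgeOf.1 ha).2 j hj, (mem_edgeOf.1 hb).2 j hj]
  rw [← card_image_of_injOn hinj, ← card_image_of_injOn (hinj.mono (filter_subset _ _)),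
    ← filter_image]
  refine IsLowerSet.card_sub_eq_card_filter_le ?_ ℓ
  intro c b hbc hc
  obtain ⟨h, hh, rfl⟩ := mem_image.1 (mem_coe.1 hc)
  have hbk : b < k := hbc.trans_lt (h i).isLt
  refine mem_coe.2 (mem_image.2 ⟨Function.update h i ⟨b, hbk⟩, mem_edgeOf.2 ⟨?_, ?_⟩, by simp⟩)
  · refine hH (fun j => ?_) (mem_edgeOf.1 hh).1
    rcases eq_or_ne j i with rfl | hj
    · simp only [Function.update_self]
      exact hbc
    · simp [Function.update_of_ne hj]
  · intro j hj
    rw [Function.update_of_ne hj, (mem_edgeOf.1 hh).2 j hj]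

theorem sum_oigEdges_card_sub (hH : IsLowerSet (H : Set (Fin m → Fin k))) (ℓ : ℕ) :
    ∑ p ∈ oigEdges H, (#p.2 - ℓ) = ∑ h ∈ H, #{i | ℓ ≤ (h i : ℕ)} := by
  simp only [card_filter]
  rw [← sum_oigEdges_sum_edgeOf]
  refine sum_congr rfl fun p hp => ?_
  obtain ⟨⟨i, g⟩, -, rfl⟩ := mem_image.1 hp
  rw [card_edgeOf_sub hH, card_filter]

end OneInclusionGraph

section ExponentialDimension

variable {m k ℓ d : ℕ} {H : Finset (Fin m → Fin k)}

theorem le_expDim (hℓ : 1 ≤ ℓ) (t : Fin d → Fin m)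
    (ht : (ℓ + 1) ^ d ≤ #(H.image fun h j => h (t j))) : d ≤ expDim ℓ H := by
  refine le_csSup ⟨#H, fun d' ⟨t', ht'⟩ => ?_⟩ ⟨t, ht⟩
  calc d' ≤ 2 ^ d' := Nat.lt_two_pow_self.le
    _ ≤ (ℓ + 1) ^ d' := Nat.pow_le_pow_left (by omega) d'
    _ ≤ #H := ht'.trans card_image_le

theorem prod_succ_le_card_image_comp (hH : IsLowerSet (H : Set (Fin m → Fin k)))
    {h : Fin m → Fin k} (hh : h ∈ H) {t : Fin d → Fin m} (ht : Function.Injective t) :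
    ∏ j, ((h (t j) : ℕ) + 1) ≤ #(H.image fun g j => g (t j)) := by
  have hcube : ∏ j, ((h (t j) : ℕ) + 1) = #(Fintype.piFinset fun j => Iic (h (t j))) := by
    simp only [Fintype.card_piFinset, Fin.card_Iic]
  rw [hcube]
  refine card_le_card fun u hu => mem_image.2 ⟨Function.extend t u h, ?_, ?_⟩
  · refine hH (fun i => ?_) hh
    by_cases hi : ∃ j, t j = i
    · obtain ⟨j, rfl⟩ := hi
      rw [ht.extend_apply]
      exact mem_Iic.1 (Fintype.mem_piFinset.1 hu j)
    · rw [Function.extend_apply' _ _ _ hi]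
  · funext j
    exact ht.extend_apply u h j

theorem card_filter_le_le_expDim (hℓ : 1 ≤ ℓ) (hH : IsLowerSet (H : Set (Fin m → Fin k)))
    {h : Fin m → Fin k} (hh : h ∈ H) : #{i | ℓ ≤ (h i : ℕ)} ≤ expDim ℓ H := by
  set S : Finset (Fin m) := {i | ℓ ≤ (h i : ℕ)}
  let t : Fin #S → Fin m := fun j => S.equivFin.symm j
  have ht : Function.Injective t := Subtype.val_injective.comp S.equivFin.symm.injective
  refine le_expDim hℓ t (le_trans ?_ (prod_succ_le_card_image_comp hH hh ht))
  simpa using pow_card_le_prod univ (fun j => (h (t j) : ℕ) + 1) (ℓ + 1)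
    fun j _ => Nat.succ_le_succ (mem_filter.1 (S.equivFin.symm j).2).2

end ExponentialDimension

theorem savd_le_expDim_of_downward_closed_general (k m ℓ : ℕ) (hℓ : 1 ≤ ℓ)
    (H : Finset (Fin m → Fin k))
    (hdc : ∀ h ∈ H, ∀ g : Fin m → Fin k, (∀ i, (g i : ℕ) ≤ (h i : ℕ)) → g ∈ H) :
    savd ℓ H ≤ (expDim ℓ H : ℝ) := by
  have hH : IsLowerSet (H : Set (Fin m → Fin k)) := fun _ g hg hh => hdc _ hh g fun i => hg i
  have hcount : ∑ h ∈ H, #{i | ℓ ≤ (h i : ℕ)} ≤ expDim ℓ H * #H := by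
    simpa [mul_comm] using sum_le_card_nsmul H _ _ fun h hh => card_filter_le_le_expDim hℓ hH hh
  rw [savd, inv_mul_eq_div, ← Nat.cast_sum, sum_oigEdges_card_sub hH]
  exact div_le_of_le_mul₀ (Nat.cast_nonneg _) (Nat.cast_nonneg _) (mod_cast hcount)

/-- For a nonempty, downward-closed finite class `H ⊆ [k]^m`, the shifting average
`ℓ`-degree is at most the `ℓ`-exponential dimension. -/
theorem savd_le_expDim_of_downward_closed (k m ℓ : ℕ) (hℓ : 1 ≤ ℓ)
    (H : Finset (Fin m → Fin k)) (hne : H.Nonempty)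
    (hdc : ∀ h ∈ H, ∀ g : Fin m → Fin k, (∀ i, (g i : ℕ) ≤ (h i : ℕ)) → g ∈ H) :
    savd ℓ H ≤ (expDim ℓ H : ℝ) :=
  savd_le_expDim_of_downward_closed_general k m ℓ hℓ H hdc
end

section
/- Let k, m, ℓ be natural numbers with ℓ ≥ 1, and let H ⊆ [k]^m be a nonempty finite class. Then there exists an ℓ-list orientation σ of the one-inclusion graph G(H) whose maximum ℓ-outdegree is at most ⌈MD^ℓ(H)⌉, the ceiling of the maximum ℓ-density of H. -/
/-- The maximum `ℓ`-density of `H`: the supremum of the shifting average `ℓ`-degrees of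
all nonempty subclasses `H' ⊆ H`. -/
noncomputable def maxDensity {m k : ℕ} (ℓ : ℕ) (H : Finset (Fin m → Fin k)) : ℝ :=
  sSup {x : ℝ | ∃ H' : Finset (Fin m → Fin k), H' ⊆ H ∧ H'.Nonempty ∧ savd ℓ H' = x}

/-! Hall's theorem produces the orientation: every incidence `(e, v)` of `G(H)` is matched
either to one of `ℓ` places reserved for `σ e` or to one of `⌈MD^ℓ(H)⌉` charge slots of `v`.
For incidences spanning the edges `F` and the vertices `V ⊆ H`, Hall's condition reduces to
`∑_{e ∈ F} (|e ∩ V| - ℓ) ≤ ⌈MD^ℓ(H)⌉ |V|`. The nonempty traces `e ∩ V` of the edges in `F`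
are distinct edges of `G(V)`, since two edges in the same direction sharing a vertex coincide,
so the left side is at most `|V| savd^ℓ(V) ≤ |V| MD^ℓ(H)`. -/

open Finset

section ListOrientation

variable {ι β : Type*}

/-- Matching the incidence `⟨e, v⟩` to the left summand puts `v` into `σ e`; matching it to one
of the `D` slots of `v` on the right charges `v` with the edge `e`. -/
def incidenceNbhd (c : ι → ℕ) (D : ℕ) (x : (_ : ι) × β) :
    Finset ((Σ e, Fin (c e)) ⊕ (β × Fin D)) :=
  (({x.1} : Finset ι).sigma fun _ => univ).disjSum ({x.2} ×ˢ univ)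

theorem card_le_card_biUnion_incidenceNbhd [DecidableEq ι] [DecidableEq β] {E : Finset ι}
    {S : ι → Finset β} {c : ι → ℕ} {D : ℕ}
    (hS : ∀ F ⊆ E, ∀ V : Finset β, ∑ e ∈ F, #(S e ∩ V) ≤ ∑ e ∈ F, c e + D * #V)
    (A : Finset (E.sigma S)) :
    #A ≤ #(A.biUnion fun x => incidenceNbhd c D x.1) := by
  set F := A.image fun x => x.1.1
  set V := A.image fun x => x.1.2
  have hF : F ⊆ E := by
    intro e he
    obtain ⟨x, -, rfl⟩ := mem_image.mp he
    exact (mem_sigma.mp x.2).1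
  have hA : A.map (Function.Embedding.subtype _) ⊆ F.sigma fun e => S e ∩ V := by
    intro y hy
    obtain ⟨x, hx, rfl⟩ := mem_map.mp hy
    exact mem_sigma.mpr ⟨mem_image_of_mem _ hx,
      mem_inter.mpr ⟨(mem_sigma.mp x.2).2, mem_image_of_mem _ hx⟩⟩
  have hN : (A.biUnion fun x => incidenceNbhd c D x.1) =
      (F.sigma fun _ => univ).disjSum (V ×ˢ univ) := by
    ext (⟨e, j⟩ | ⟨v, t⟩) <;> simp [incidenceNbhd, F, V, eq_comm]
  calc #A = #(A.map (Function.Embedding.subtype _)) := (card_map _).symm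
    _ ≤ ∑ e ∈ F, #(S e ∩ V) := (card_le_card hA).trans (card_sigma _ _).le
    _ ≤ ∑ e ∈ F, c e + D * #V := hS F hF V
    _ = _ := by rw [hN, card_disjSum, card_sigma, card_product]; simp [mul_comm]

theorem exists_orientation_of_sum_card_inter_le [DecidableEq β] {E : Finset ι}
    {S : ι → Finset β} {c : ι → ℕ} {D : ℕ}
    (hS : ∀ F ⊆ E, ∀ V : Finset β, ∑ e ∈ F, #(S e ∩ V) ≤ ∑ e ∈ F, c e + D * #V) :
    ∃ σ : ι → Finset β, (∀ e ∈ E, σ e ⊆ S e ∧ #(σ e) ≤ c e) ∧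
      ∀ v, #(E.filter fun e => v ∈ S e ∧ v ∉ σ e) ≤ D := by
  classical
  obtain ⟨f, hf, hfN⟩ := (all_card_le_biUnion_card_iff_exists_injective
    fun x : E.sigma S => incidenceNbhd c D x.1).mp (card_le_card_biUnion_incidenceNbhd hS)
  set σ : ι → Finset β := fun e =>
    ({x | x.1.1 = e ∧ (f x).isLeft} : Finset (E.sigma S)).image fun x => x.1.2
  have hσ_card (e : ι) : #(σ e) ≤ c e := calc
    #(σ e) ≤ #({x | x.1.1 = e ∧ (f x).isLeft} : Finset (E.sigma S)) := card_image_le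
    _ ≤ #((({e} : Finset ι).sigma fun _ => univ).disjSum (∅ : Finset (β × Fin D))) := by
      refine card_le_card_of_injOn f (fun x hx => ?_) hf.injOn
      have := hfN x
      rcases h : f x with ⟨e', j⟩ | ⟨w, t⟩ <;> simp_all [incidenceNbhd]
    _ = c e := by simp
  have houtdeg (v : β) : #(E.filter fun e => v ∈ S e ∧ v ∉ σ e) ≤ D := calc
    _ ≤ #(({x | x.1.2 = v ∧ (f x).isRight} : Finset (E.sigma S)).image fun x => x.1.1) := by
      refine card_le_card fun e he => ?_
      obtain ⟨he, hv, hvσ⟩ := mem_filter.mp he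
      let x : E.sigma S := ⟨⟨e, v⟩, mem_sigma.mpr ⟨he, hv⟩⟩
      have hx : (f x).isRight := by
        refine Sum.not_isLeft.mp fun hl => hvσ (mem_image.mpr ⟨x, ?_, rfl⟩)
        simp [x, hl]
      exact mem_image.mpr ⟨x, by simp [x, hx], rfl⟩
    _ ≤ #({x | x.1.2 = v ∧ (f x).isRight} : Finset (E.sigma S)) := card_image_le
    _ ≤ #((∅ : Finset (Σ e, Fin (c e))).disjSum ({v} ×ˢ univ)) := by
      refine card_le_card_of_injOn f (fun x hx => ?_) hf.injOn
      have := hfN x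
      rcases h : f x with ⟨e', j⟩ | ⟨w, t⟩ <;> simp_all [incidenceNbhd]
    _ = D := by simp
  refine ⟨σ, fun e _ => ⟨fun v hv => ?_, hσ_card e⟩, houtdeg⟩
  obtain ⟨x, hx, rfl⟩ := mem_image.mp hv
  simp only [mem_filter] at hx
  exact hx.2.1 ▸ (mem_sigma.mp x.2).2

end ListOrientation

namespace OneInclusion

variable {m k : ℕ} {H V : Finset (Fin m → Fin k)} {i : Fin m} {g h : Fin m → Fin k}
  {p q : Fin m × Finset (Fin m → Fin k)}

lemma edgeOf_eq_of_mem (hh : h ∈ edgeOf H i g) : edgeOf H i h = edgeOf H i g := by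
  have hgh := (mem_filter.mp hh).2
  ext x
  simp only [edgeOf, mem_filter]
  exact and_congr_right fun _ =>
    ⟨fun hx j hj => (hx j hj).trans (hgh j hj), fun hx j hj => (hx j hj).trans (hgh j hj).symm⟩

lemma edgeOf_eq_inter_of_subset (hV : V ⊆ H) (i : Fin m) (g : Fin m → Fin k) :
    edgeOf V i g = edgeOf H i g ∩ V := by
  ext x
  simp only [edgeOf, mem_filter, mem_inter]
  exact ⟨fun ⟨hx, hxg⟩ => ⟨⟨hV hx, hxg⟩, hx⟩, fun ⟨⟨_, hxg⟩, hx⟩ => ⟨hx, hxg⟩⟩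

lemma mem_oigEdges : p ∈ oigEdges H ↔ ∃ i, ∃ g ∈ H, p = (i, edgeOf H i g) := by
  simp [oigEdges, eq_comm]

lemma subset_of_mem_oigEdges (hp : p ∈ oigEdges H) : p.2 ⊆ H := by
  obtain ⟨i, g, -, rfl⟩ := mem_oigEdges.mp hp
  exact filter_subset _ _

lemma snd_eq_edgeOf (hp : p ∈ oigEdges H) (hg : g ∈ p.2) : p.2 = edgeOf H p.1 g := by
  obtain ⟨i, g₀, -, rfl⟩ := mem_oigEdges.mp hp
  exact (edgeOf_eq_of_mem hg).symm

lemma mk_inter_mem_oigEdges (hV : V ⊆ H) (hp : p ∈ oigEdges H) (hg : g ∈ p.2 ∩ V) :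
    (p.1, p.2 ∩ V) ∈ oigEdges V := by
  obtain ⟨hgp, hgV⟩ := mem_inter.mp hg
  rw [snd_eq_edgeOf hp hgp, ← edgeOf_eq_inter_of_subset hV]
  exact mem_oigEdges.mpr ⟨p.1, g, hgV, rfl⟩

lemma sum_card_inter_tsub_le (ℓ : ℕ) (hV : V ⊆ H)
    {F : Finset (Fin m × Finset (Fin m → Fin k))} (hF : F ⊆ oigEdges H) :
    ∑ p ∈ F, (#(p.2 ∩ V) - ℓ) ≤ ∑ q ∈ oigEdges V, (#q.2 - ℓ) := by
  set F' := F.filter fun p => (p.2 ∩ V).Nonempty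
  have hrestrict_inj :
      Set.InjOn (fun p : Fin m × Finset (Fin m → Fin k) => (p.1, p.2 ∩ V)) F' := by
    intro p hp q hq hpq
    obtain ⟨h1, h2⟩ := Prod.mk_inj.mp hpq
    obtain ⟨hpF, g, hg⟩ := mem_filter.mp hp
    have hgq : g ∈ q.2 ∩ V := h2 ▸ hg
    refine Prod.ext h1 ?_
    rw [snd_eq_edgeOf (hF hpF) (mem_inter.mp hg).1,
      snd_eq_edgeOf (hF (mem_filter.mp hq).1) (mem_inter.mp hgq).1, h1]
  calc ∑ p ∈ F, (#(p.2 ∩ V) - ℓ) = ∑ p ∈ F', (#(p.2 ∩ V) - ℓ) :=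
        (sum_filter_of_ne fun _ _ hp => card_pos.mp (by omega)).symm
    _ = ∑ q ∈ F'.image fun p => (p.1, p.2 ∩ V), (#q.2 - ℓ) :=
        (sum_image (f := fun q : Fin m × Finset (Fin m → Fin k) => #q.2 - ℓ)
          hrestrict_inj).symm
    _ ≤ ∑ q ∈ oigEdges V, (#q.2 - ℓ) := by
        refine sum_le_sum_of_subset (image_subset_iff.mpr fun p hp => ?_)
        obtain ⟨hpF, g, hg⟩ := mem_filter.mp hp
        exact mk_inter_mem_oigEdges hV (hF hpF) hg

lemma bddAbove_savd (ℓ : ℕ) (H : Finset (Fin m → Fin k)) :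
    BddAbove {x : ℝ | ∃ H' : Finset (Fin m → Fin k), H' ⊆ H ∧ H'.Nonempty ∧ savd ℓ H' = x} := by
  refine ((H.powerset.image (savd ℓ)).finite_toSet.subset ?_).bddAbove
  rintro x ⟨H', hH', -, rfl⟩
  simpa using ⟨H', hH', rfl⟩

lemma savd_le_maxDensity (ℓ : ℕ) {H' : Finset (Fin m → Fin k)} (hH' : H' ⊆ H)
    (hne : H'.Nonempty) : savd ℓ H' ≤ maxDensity ℓ H :=
  le_csSup (bddAbove_savd ℓ H) ⟨H', hH', hne, rfl⟩

lemma sum_oigEdges_tsub_le (ℓ : ℕ) (hV : V ⊆ H) :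
    ∑ q ∈ oigEdges V, (#q.2 - ℓ) ≤ ⌈maxDensity ℓ H⌉₊ * #V := by
  rcases V.eq_empty_or_nonempty with rfl | hne
  · simp [oigEdges]
  have hV0 : (0 : ℝ) < #V := by exact_mod_cast hne.card_pos
  have hsum : ((∑ q ∈ oigEdges V, (#q.2 - ℓ) : ℕ) : ℝ) = #V * savd ℓ V := by
    rw [savd, mul_inv_cancel_left₀ hV0.ne', Nat.cast_sum]
  have hle : ((∑ q ∈ oigEdges V, (#q.2 - ℓ) : ℕ) : ℝ) ≤ ⌈maxDensity ℓ H⌉₊ * #V := by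
    rw [hsum, mul_comm]
    gcongr
    exact (savd_le_maxDensity ℓ hV hne).trans (Nat.le_ceil _)
  exact_mod_cast hle

lemma sum_card_inter_le (ℓ : ℕ) {F : Finset (Fin m × Finset (Fin m → Fin k))}
    (hF : F ⊆ oigEdges H) (V : Finset (Fin m → Fin k)) :
    ∑ e ∈ F, #(e.2 ∩ V) ≤ ∑ _e ∈ F, ℓ + ⌈maxDensity ℓ H⌉₊ * #V := by
  have hinter : ∀ e ∈ F, e.2 ∩ V = e.2 ∩ (H ∩ V) := fun e he => by
    rw [← inter_assoc, inter_eq_left.mpr (subset_of_mem_oigEdges (hF he))]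
  calc ∑ e ∈ F, #(e.2 ∩ V) = ∑ e ∈ F, #(e.2 ∩ (H ∩ V)) :=
        sum_congr rfl fun e he => by rw [hinter e he]
    _ ≤ ∑ e ∈ F, (ℓ + (#(e.2 ∩ (H ∩ V)) - ℓ)) := sum_le_sum fun _ _ => le_add_tsub
    _ = ∑ _e ∈ F, ℓ + ∑ e ∈ F, (#(e.2 ∩ (H ∩ V)) - ℓ) := sum_add_distrib
    _ ≤ ∑ _e ∈ F, ℓ + ⌈maxDensity ℓ H⌉₊ * #(H ∩ V) := by
        gcongr
        exact (sum_card_inter_tsub_le ℓ inter_subset_left hF).trans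
          (sum_oigEdges_tsub_le ℓ inter_subset_left)
    _ ≤ ∑ _e ∈ F, ℓ + ⌈maxDensity ℓ H⌉₊ * #V := by
        gcongr
        exact inter_subset_right

end OneInclusion

theorem orientation_outdeg_le_ceil_maxDensity_general (k m ℓ : ℕ)
    (H : Finset (Fin m → Fin k)) :
    ∃ σ : Fin m × Finset (Fin m → Fin k) → Finset (Fin m → Fin k),
      (∀ e ∈ oigEdges H, σ e ⊆ e.2 ∧ (σ e).card ≤ ℓ) ∧
      ∀ v ∈ H, ((oigEdges H).filter fun e => v ∈ e.2 ∧ v ∉ σ e).card ≤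
        ⌈maxDensity ℓ H⌉₊ := by
  obtain ⟨σ, hσ, houtdeg⟩ := exists_orientation_of_sum_card_inter_le (S := Prod.snd)
    (c := fun _ => ℓ) fun F hF V => OneInclusion.sum_card_inter_le ℓ hF V
  exact ⟨σ, hσ, fun v _ => houtdeg v⟩

/-- Every nonempty finite class `H ⊆ [k]^m` admits an `ℓ`-list orientation of its
one-inclusion graph (each edge `e` is assigned a subset `σ e ⊆ e` of size at most `ℓ`)
whose maximum `ℓ`-outdegree is at most `⌈MD^ℓ(H)⌉`. -/
theorem orientation_outdeg_le_ceil_maxDensity (k m ℓ : ℕ) (hℓ : 1 ≤ ℓ)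
    (H : Finset (Fin m → Fin k)) (hne : H.Nonempty) :
    ∃ σ : Fin m × Finset (Fin m → Fin k) → Finset (Fin m → Fin k),
      (∀ e ∈ oigEdges H, σ e ⊆ e.2 ∧ (σ e).card ≤ ℓ) ∧
      ∀ v ∈ H, ((oigEdges H).filter fun e => v ∈ e.2 ∧ v ∉ σ e).card ≤
        ⌈maxDensity ℓ H⌉₊ :=
  orientation_outdeg_le_ceil_maxDensity_general k m ℓ H
end
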